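/- arXiv:2601.17531 — 11 statements merged into one kernel-verified Lean document; each statement's English description precedes it below -/
import Mathlib

section
/- If L is a Leibniz n-algebra with n-ary bracket [-,…,-], then L with the p-ary bracket [l_1,…,l_p] = [l_1,…,l_{n-1},[l_n,…,l_{2n-2},[…,[l_{p-n+1},…,l_p]…]]] is a Leibniz p-algebra, where p = k(n-1)+1. -/
open Function TensorProduct

section Prelude

variable {L : Type*}

/-- The nested (iterated) bracket: `nestBr b k` is the `k*(n-1)+1`-ary operation
`ω_p(a_1,…,a_p) = b(a_1,…,a_{n-1}, nestBr b (k-1) (a_n,…,a_p))`. -/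
def nestBr {n : ℕ} (b : (Fin n → L) → L) : (k : ℕ) → (Fin (k * (n - 1) + 1) → L) → L
  | 0, a => a ⟨0, Nat.succ_pos _⟩
  | k + 1, a =>
    b fun j : Fin n =>
      if h : (j : ℕ) < n - 1 then
        a ⟨(j : ℕ),
          Nat.lt_succ_of_lt (lt_of_lt_of_le h (Nat.le_mul_of_pos_left _ (Nat.succ_pos k)))⟩
      else
        nestBr b k fun i =>
          a ⟨(n - 1) + (i : ℕ), by
            have h1 : (k + 1) * (n - 1) + 1 = (n - 1) + (k * (n - 1) + 1) := by ring
            rw [h1]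
            exact Nat.add_lt_add_left i.isLt _⟩

/-- `f` is a derivation with respect to the `n`-linear operation `b`. -/
def IsNDeriv {n : ℕ} [AddCommMonoid L] (b : (Fin n → L) → L) (f : L → L) : Prop :=
  ∀ a : Fin n → L, f (b a) = ∑ i, b (Function.update a i (f (a i)))

/-- The fundamental identity of Leibniz `n`-algebras:
`[[x_1,…,x_n],y_2,…,y_n] = Σ_i [x_1,…,[x_i,y_2,…,y_n],…,x_n]`
(the entries `y 1, …, y (n-1)` play the role of `y_2,…,y_n`). -/
def FundId {n : ℕ} [NeZero n] [AddCommMonoid L] (b : (Fin n → L) → L) : Prop :=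
  ∀ x y : Fin n → L,
    b (Function.update y 0 (b x)) =
      ∑ i, b (Function.update x i (b (Function.update y 0 (x i))))

/-- The right-nested bracket `[x_1,[x_2,…,[x_m,x_{m+1}]…]]` built from a binary bracket. -/
def nested2 (b : L → L → L) : (m : ℕ) → (Fin (m + 1) → L) → L
  | 0, a => a 0
  | m + 1, a => b (a 0) (nested2 b m fun i => a i.succ)

end Prelude

section Aux

variable {L : Type*}

def blockTail {n : ℕ} (k : ℕ) (a : Fin ((k+1) * (n - 1) + 1) → L) : Fin (k * (n-1) + 1) → L :=
  fun i => a ⟨(n - 1) + (i : ℕ), by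
    have h1 : (k + 1) * (n - 1) + 1 = (n - 1) + (k * (n - 1) + 1) := by ring
    have := i.isLt; omega⟩

def headArg {n : ℕ} (b : (Fin n → L) → L) (k : ℕ) (a : Fin ((k+1) * (n - 1) + 1) → L) :
    Fin n → L :=
  fun j => if h : (j : ℕ) < n - 1 then
      a ⟨(j : ℕ), by
        have h1 : (k + 1) * (n - 1) + 1 = (n - 1) + (k * (n - 1) + 1) := by ring
        omega⟩
    else nestBr b k (blockTail k a)

theorem nestBr_succ {n : ℕ} (b : (Fin n → L) → L) (k : ℕ) (a : Fin ((k+1) * (n - 1) + 1) → L) :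
    nestBr b (k+1) a = b (headArg b k a) := rfl

theorem blockTail_update_lt {n : ℕ} (k : ℕ) (a : Fin ((k+1) * (n - 1) + 1) → L)
    (i : Fin ((k+1) * (n - 1) + 1)) (hi : (i : ℕ) < n - 1) (z : L) :
    blockTail k (update a i z) = blockTail k a := by
  funext j
  simp only [blockTail, Function.update_apply, Fin.ext_iff]
  rw [if_neg (by omega)]

theorem blockTail_update_ge {n : ℕ} (k : ℕ) (a : Fin ((k+1) * (n - 1) + 1) → L)
    (i : Fin ((k+1) * (n - 1) + 1)) (hi : ¬ (i : ℕ) < n - 1) (z : L) :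
    blockTail k (update a i z) =
      update (blockTail k a) ⟨(i : ℕ) - (n-1), by
        have h1 : (k + 1) * (n - 1) + 1 = (n - 1) + (k * (n - 1) + 1) := by ring
        have := i.isLt; omega⟩ z := by
  funext j
  simp only [blockTail, Function.update_apply, Fin.ext_iff]
  split_ifs with h1 h2 h2 <;> first | rfl | (exfalso; omega)

theorem headArg_update_lt {n : ℕ} (b : (Fin n → L) → L) (k : ℕ)
    (a : Fin ((k+1) * (n - 1) + 1) → L)
    (i : Fin ((k+1) * (n - 1) + 1)) (hi : (i : ℕ) < n - 1) (z : L) :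
    headArg b k (update a i z) =
      update (headArg b k a) ⟨(i : ℕ), lt_of_lt_of_le hi (Nat.sub_le n 1)⟩ z := by
  funext j
  simp only [headArg, Function.update_apply, Fin.ext_iff, blockTail_update_lt k a i hi z]
  split_ifs <;> first | rfl | (exfalso; omega)

theorem headArg_update_ge {n : ℕ} [NeZero n] (b : (Fin n → L) → L) (k : ℕ)
    (a : Fin ((k+1) * (n - 1) + 1) → L)
    (i : Fin ((k+1) * (n - 1) + 1)) (hi : ¬ (i : ℕ) < n - 1) (z : L) :
    headArg b k (update a i z) =
      update (headArg b k a) ⟨n - 1, Nat.sub_lt (Nat.pos_of_ne_zero (NeZero.ne n)) one_pos⟩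
        (nestBr b k (update (blockTail k a) ⟨(i : ℕ) - (n-1), by
          have h1 : (k + 1) * (n - 1) + 1 = (n - 1) + (k * (n - 1) + 1) := by ring
          have := i.isLt; omega⟩ z)) := by
  funext j
  simp only [headArg, Function.update_apply, Fin.ext_iff, blockTail_update_ge k a i hi z]
  split_ifs <;> first | rfl | (exfalso; omega)

theorem sum_split {M : Type*} [AddCommMonoid M] {n : ℕ} (k : ℕ)
    (F : Fin ((k+1) * (n - 1) + 1) → M) :
    ∑ i, F i = (∑ j : Fin (n-1), F ⟨(j : ℕ), by
        have h1 : (k + 1) * (n - 1) + 1 = (n - 1) + (k * (n - 1) + 1) := by ring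
        omega⟩)
      + ∑ i : Fin (k * (n-1) + 1), F ⟨(n - 1) + (i : ℕ), by
        have h1 : (k + 1) * (n - 1) + 1 = (n - 1) + (k * (n - 1) + 1) := by ring
        have := i.isLt; omega⟩ := by
  have h1 : (k + 1) * (n - 1) + 1 = (n - 1) + (k * (n - 1) + 1) := by ring
  rw [← (finCongr h1.symm).sum_comp F, Fin.sum_univ_add]
  congr 1 <;> apply Finset.sum_congr rfl <;> intro j _ <;> congr 1 <;> ext <;> simp

theorem sum_split_n {M : Type*} [AddCommMonoid M] {n : ℕ} (hn : 1 ≤ n)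
    (F : Fin n → M) :
    ∑ j, F j = (∑ j : Fin (n-1), F ⟨(j : ℕ), by omega⟩) + F ⟨n - 1, by omega⟩ := by
  have h1 : n = (n - 1) + 1 := by omega
  rw [← (finCongr h1.symm).sum_comp F, Fin.sum_univ_castSucc]
  congr 1
  all_goals first
    | rfl
    | (apply Finset.sum_congr rfl; intro j _; congr 1; ext; simp)
    | (congr 1; ext; simp)

theorem blockTail_update_tail {n : ℕ} (k : ℕ) (a : Fin ((k+1) * (n - 1) + 1) → L)
    (i : Fin (k * (n-1) + 1)) (z : L) :
    blockTail k (update a ⟨(n - 1) + (i : ℕ), by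
        have h1 : (k + 1) * (n - 1) + 1 = (n - 1) + (k * (n - 1) + 1) := by ring
        have := i.isLt; omega⟩ z) =
      update (blockTail k a) i z := by
  funext j
  simp only [blockTail, Function.update_apply, Fin.ext_iff]
  split_ifs <;> first | rfl | (exfalso; omega)

theorem headArg_update_tail {n : ℕ} [NeZero n] (b : (Fin n → L) → L) (k : ℕ)
    (a : Fin ((k+1) * (n - 1) + 1) → L) (i : Fin (k * (n-1) + 1)) (z : L) :
    headArg b k (update a ⟨(n - 1) + (i : ℕ), by
        have h1 : (k + 1) * (n - 1) + 1 = (n - 1) + (k * (n - 1) + 1) := by ring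
        have := i.isLt; omega⟩ z) =
      update (headArg b k a) ⟨n - 1, Nat.sub_lt (Nat.pos_of_ne_zero (NeZero.ne n)) one_pos⟩
        (nestBr b k (update (blockTail k a) i z)) := by
  funext j
  simp only [headArg, Function.update_apply, Fin.ext_iff, blockTail_update_tail k a i z]
  split_ifs <;> first | rfl | (exfalso; omega)

theorem headArg_lt {n : ℕ} (b : (Fin n → L) → L) (k : ℕ)
    (a : Fin ((k+1) * (n - 1) + 1) → L) (j : Fin n) (h : (j : ℕ) < n - 1) :
    headArg b k a j = a ⟨(j : ℕ), by
        have h1 : (k + 1) * (n - 1) + 1 = (n - 1) + (k * (n - 1) + 1) := by ring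
        omega⟩ := dif_pos h

theorem headArg_last {n : ℕ} (b : (Fin n → L) → L) (k : ℕ)
    (a : Fin ((k+1) * (n - 1) + 1) → L) (j : Fin n) (h : ¬ (j : ℕ) < n - 1) :
    headArg b k a j = nestBr b k (blockTail k a) := dif_neg h

section Lin
variable {K LL : Type*} [Field K] [AddCommGroup LL] [Module K LL]

theorem isNDeriv_nestBr {n : ℕ} [NeZero n] (hn : 2 ≤ n)
    (b : MultilinearMap K (fun _ : Fin n => LL) LL) (f : LL → LL)
    (hf : IsNDeriv ⇑b f) (k : ℕ) : IsNDeriv (nestBr ⇑b k) f := by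
  induction k with
  | zero =>
    intro a
    haveI : Subsingleton (Fin (0 * (n-1) + 1)) := by
      rw [Nat.zero_mul]; exact Fin.subsingleton_one
    rw [Fintype.sum_subsingleton _ (⟨0, Nat.succ_pos _⟩ : Fin (0 * (n-1) + 1))]
    show f (a _) = Function.update a _ (f (a _)) ⟨0, Nat.succ_pos _⟩
    rw [Function.update_self]
  | succ k ih =>
    intro a
    rw [nestBr_succ, hf (headArg ⇑b k a),
      sum_split k (fun i => nestBr ⇑b (k+1) (Function.update a i (f (a i)))),
      sum_split_n (M := LL) (by omega)
        (fun j => b (Function.update (headArg ⇑b k a) j (f (headArg ⇑b k a j))))]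
    congr 1
    · apply Finset.sum_congr rfl; intro j _
      rw [headArg_lt ⇑b k a _ j.isLt, nestBr_succ,
        headArg_update_lt ⇑b k a _ j.isLt]
    · rw [headArg_last ⇑b k a _ (lt_irrefl _), ih (blockTail k a), b.map_update_sum]
      apply Finset.sum_congr rfl; intro i _
      rw [nestBr_succ, headArg_update_tail ⇑b k a i]
      rfl

theorem nestBr_update_add {n : ℕ} [NeZero n]
    (b : MultilinearMap K (fun _ : Fin n => LL) LL) : ∀ (k : ℕ)
    (a : Fin (k * (n-1) + 1) → LL) (i : Fin (k * (n-1) + 1)) (z w : LL),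
    nestBr ⇑b k (update a i (z + w)) =
      nestBr ⇑b k (update a i z) + nestBr ⇑b k (update a i w) := by
  intro k
  induction k with
  | zero =>
    intro a i z w
    haveI : Subsingleton (Fin (0 * (n-1) + 1)) := by
      rw [Nat.zero_mul]; exact Fin.subsingleton_one
    have hi : i = ⟨0, Nat.succ_pos _⟩ := Subsingleton.elim _ _
    rw [hi]
    show Function.update a _ (z + w) ⟨0, Nat.succ_pos _⟩ =
      Function.update a _ z ⟨0, Nat.succ_pos _⟩ + Function.update a _ w ⟨0, Nat.succ_pos _⟩
    simp
  | succ k ih =>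
    intro a i z w
    by_cases hi : (i : ℕ) < n - 1
    · rw [nestBr_succ, nestBr_succ, nestBr_succ, headArg_update_lt _ _ _ i hi,
        headArg_update_lt _ _ _ i hi, headArg_update_lt _ _ _ i hi]
      exact b.map_update_add _ _ _ _
    · rw [nestBr_succ, nestBr_succ, nestBr_succ, headArg_update_ge _ _ _ i hi,
        headArg_update_ge _ _ _ i hi, headArg_update_ge _ _ _ i hi, ih,
        b.map_update_add]

theorem nestBr_update_smul {n : ℕ} [NeZero n]
    (b : MultilinearMap K (fun _ : Fin n => LL) LL) : ∀ (k : ℕ)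
    (a : Fin (k * (n-1) + 1) → LL) (i : Fin (k * (n-1) + 1)) (c : K) (z : LL),
    nestBr ⇑b k (update a i (c • z)) = c • nestBr ⇑b k (update a i z) := by
  intro k
  induction k with
  | zero =>
    intro a i c z
    haveI : Subsingleton (Fin (0 * (n-1) + 1)) := by
      rw [Nat.zero_mul]; exact Fin.subsingleton_one
    have hi : i = ⟨0, Nat.succ_pos _⟩ := Subsingleton.elim _ _
    rw [hi]
    show Function.update a _ (c • z) ⟨0, Nat.succ_pos _⟩ =
      c • Function.update a _ z ⟨0, Nat.succ_pos _⟩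
    simp
  | succ k ih =>
    intro a i c z
    by_cases hi : (i : ℕ) < n - 1
    · rw [nestBr_succ, nestBr_succ, headArg_update_lt _ _ _ i hi,
        headArg_update_lt _ _ _ i hi]
      exact b.map_update_smul _ _ _ _
    · rw [nestBr_succ, nestBr_succ, headArg_update_ge _ _ _ i hi,
        headArg_update_ge _ _ _ i hi, ih, b.map_update_smul]

end Lin

section Lin2
variable {K LL : Type*} [Field K] [AddCommGroup LL] [Module K LL]

theorem nestBr_update_zero {n : ℕ} [NeZero n] (hn : 2 ≤ n)
    (b : MultilinearMap K (fun _ : Fin n => LL) LL) (k : ℕ)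
    (y : Fin ((k+1) * (n - 1) + 1) → LL) (z : LL) :
    nestBr ⇑b (k+1) (Function.update y 0 z) =
      b (Function.update (headArg ⇑b k y) 0 z) := by
  have h0 : (((0 : Fin ((k+1) * (n - 1) + 1))) : ℕ) < n - 1 := by
    simp [Fin.val_zero]; omega
  rw [nestBr_succ, headArg_update_lt ⇑b k y 0 h0]
  have : (⟨((0 : Fin ((k+1) * (n - 1) + 1)) : ℕ), lt_of_lt_of_le h0 (Nat.sub_le n 1)⟩ : Fin n)
      = 0 := by ext; simp
  rw [this]


end Lin2

end Aux

/-- if `L` is a Leibniz `n`-algebra, then `L` with the nested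
`p`-ary bracket (`p = k*(n-1)+1`) is a Leibniz `p`-algebra. -/
theorem leibniz_p_algebra_of_nested {K L : Type*} [Field K] [AddCommGroup L] [Module K L]
    (n k : ℕ) [NeZero n] (hn : 2 ≤ n) (hk : 1 ≤ k)
    (b : MultilinearMap K (fun _ : Fin n => L) L) (hb : FundId ⇑b) :
    FundId (nestBr (⇑b) k) ∧
      ∃ bp : MultilinearMap K (fun _ : Fin (k * (n - 1) + 1) => L) L,
        ⇑bp = nestBr (⇑b) k := by
  constructor
  · intro x y
    obtain ⟨k', rfl⟩ : ∃ k', k = k' + 1 := ⟨k - 1, by omega⟩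
    set Y := headArg ⇑b k' y with hY
    have hfd : IsNDeriv ⇑b (fun z => b (Function.update Y 0 z)) := fun a => hb a Y
    have hder := isNDeriv_nestBr hn b _ hfd (k' + 1)
    simp only [nestBr_update_zero hn b k' y]
    exact hder x
  · refine ⟨⟨nestBr ⇑b k, ?_, ?_⟩, rfl⟩
    · intro dec m i x y
      have : dec = instDecidableEqFin _ := Subsingleton.elim _ _
      subst this
      exact nestBr_update_add b k m i x y
    · intro dec m i c x
      have : dec = instDecidableEqFin _ := Subsingleton.elim _ _
      subst this
      exact nestBr_update_smul b k m i c x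
end

section
/- A Leibniz algebra L (i.e., a vector space with bilinear bracket satisfying [x,[y,z]] = [[x,y],z] − [[x,z],y]) is a Leibniz n-algebra with respect to the n-ary bracket [x_1,…,x_n] = [x_1,[x_2,…,[x_{n-1},x_n]…]]. -/
open Function TensorProduct

/-!
Fix `y` and put `Y = [y_2,…,y_n]`. For `n ≥ 2`, replacing `y_1` by `z` in `[y_1,…,y_n]` gives
`[z, Y]`, so the fundamental identity says that right multiplication by `Y` is a derivation of
the `n`-ary bracket. The Leibniz identity says exactly that right multiplications are derivations
of the binary bracket, and a derivation of the binary bracket is one of every right-nested bracket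
built from it, by induction on the nesting depth.
-/

section

variable {M : Type*}

theorem fundId_iff_forall_isNDeriv {n : ℕ} [NeZero n] [AddCommMonoid M] (b : (Fin n → M) → M) :
    FundId b ↔ ∀ y : Fin n → M, IsNDeriv b fun z => b (Function.update y 0 z) :=
  forall_comm

theorem nested2_succ (b : M → M → M) (m : ℕ) (a : Fin (m + 2) → M) :
    nested2 b (m + 1) a = b (a 0) (nested2 b m (Fin.tail a)) :=
  rfl

theorem nested2_update_zero (b : M → M → M) (m : ℕ) (y : Fin (m + 2) → M) (z : M) :
    nested2 b (m + 1) (Function.update y 0 z) = b z (nested2 b m (Fin.tail y)) := by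
  rw [nested2_succ, Function.update_self, Fin.tail_update_zero]

theorem isNDeriv_nested2_zero [AddCommMonoid M] (b : M → M → M) (f : M → M) :
    IsNDeriv (nested2 b 0) f := by
  intro a
  simp [nested2]

section Linear

variable {R : Type*} [CommSemiring R] [AddCommMonoid M] [Module R M]

theorem isNDeriv_nested2 (br : M →ₗ[R] M →ₗ[R] M) (f : M →ₗ[R] M)
    (hf : ∀ u v, f (br u v) = br (f u) v + br u (f v)) (m : ℕ) :
    IsNDeriv (nested2 (fun x y => br x y) m) f := by
  induction m with
  | zero => exact isNDeriv_nested2_zero _ f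
  | succ m ih =>
    intro a
    rw [nested2_succ, hf, ih, map_sum]
    conv_rhs => rw [Fin.sum_univ_succ, nested2_update_zero]
    congr 1
    refine Finset.sum_congr rfl fun j _ => ?_
    rw [nested2_succ, Function.update_of_ne (Fin.succ_ne_zero j).symm, Fin.tail_update_succ]
    rfl

def nested2Multilinear (br : M →ₗ[R] M →ₗ[R] M) :
    (m : ℕ) → MultilinearMap R (fun _ : Fin (m + 1) => M) M
  | 0 => haveI := Fin.subsingleton_one; MultilinearMap.ofSubsingleton R M M 0 LinearMap.id
  | m + 1 => LinearMap.uncurryLeft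
      { toFun := fun z => (br z).compMultilinearMap (nested2Multilinear br m)
        map_add' := fun x y => by ext; simp
        map_smul' := fun c x => by ext; simp }

theorem coe_nested2Multilinear (br : M →ₗ[R] M →ₗ[R] M) (m : ℕ) :
    ⇑(nested2Multilinear br m) = nested2 (fun x y => br x y) m := by
  induction m with
  | zero => funext a; simp [nested2Multilinear, nested2]
  | succ m ih =>
    funext a
    simp [nested2Multilinear, LinearMap.uncurryLeft_apply, ih, nested2_succ]

end Linear

theorem isDerivation_flip_of_leibniz {R : Type*} [CommSemiring R] [AddCommGroup M] [Module R M]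
    (br : M →ₗ[R] M →ₗ[R] M)
    (hLeib : ∀ x y z : M, br x (br y z) = br (br x y) z - br (br x z) y) (Y u v : M) :
    br.flip Y (br u v) = br (br.flip Y u) v + br u (br.flip Y v) := by
  simp only [LinearMap.flip_apply, hLeib u v Y]
  abel

end

theorem leibniz_n_algebra_of_leibniz_general {K L : Type*} [Field K] [AddCommGroup L] [Module K L]
    (br : L →ₗ[K] L →ₗ[K] L)
    (hLeib : ∀ x y z : L, br x (br y z) = br (br x y) z - br (br x z) y)
    (m : ℕ) :
    FundId (nested2 (fun x y => br x y) m) ∧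
      ∃ bn : MultilinearMap K (fun _ : Fin (m + 1) => L) L,
        ⇑bn = nested2 (fun x y => br x y) m := by
  refine ⟨(fundId_iff_forall_isNDeriv _).2 fun y => ?_,
    nested2Multilinear br m, coe_nested2Multilinear br m⟩
  cases m with
  | zero => exact isNDeriv_nested2_zero _ _
  | succ k =>
    have hright : (fun z => nested2 (fun x y => br x y) (k + 1) (Function.update y 0 z)) =
        br.flip (nested2 (fun x y => br x y) k (Fin.tail y)) := by
      funext z
      rw [nested2_update_zero, LinearMap.flip_apply]
    rw [hright]
    exact isNDeriv_nested2 br _ (isDerivation_flip_of_leibniz br hLeib _) (k + 1)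

/-- a Leibniz algebra is a Leibniz `n`-algebra (`n = m+1 ≥ 2`) with respect to
the right-nested bracket `[x_1,…,x_n] = [x_1,[x_2,…,[x_{n-1},x_n]…]]`. -/
theorem leibniz_n_algebra_of_leibniz {K L : Type*} [Field K] [AddCommGroup L] [Module K L]
    (br : L →ₗ[K] L →ₗ[K] L)
    (hLeib : ∀ x y z : L, br x (br y z) = br (br x y) z - br (br x z) y)
    (m : ℕ) (hm : 1 ≤ m) :
    FundId (nested2 (fun x y => br x y) m) ∧
      ∃ bn : MultilinearMap K (fun _ : Fin (m + 1) => L) L,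
        ⇑bn = nested2 (fun x y => br x y) m :=
  leibniz_n_algebra_of_leibniz_general br hLeib m
end

section
/- Let L be a Leibniz n-algebra, and let U_n^p(L) be the Leibniz p-algebra (p = k(n-1)+1) with the same underlying space and p-ary bracket given by iterated n-ary brackets. Then L is perfect (L = [L^n]) if and only if U_n^p(L) is perfect (L = [L^p]). -/
open Function TensorProduct

/-- a Leibniz `n`-algebra `L` is perfect iff the Leibniz `p`-algebra
`U_n^p(L)` (same space, nested `p`-ary bracket, `p = k*(n-1)+1`) is perfect. -/
theorem perfect_iff_nested_perfect {K L : Type*} [Field K] [AddCommGroup L] [Module K L]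
    (n k : ℕ) [NeZero n] (hn : 2 ≤ n) (hk : 1 ≤ k)
    (b : MultilinearMap K (fun _ : Fin n => L) L) (hb : FundId ⇑b) :
    Submodule.span K (Set.range fun a : Fin n → L => b a) = ⊤ ↔
      Submodule.span K (Set.range (nestBr (⇑b) k)) = ⊤ := by
  have hlast : n - 1 < n := Nat.sub_lt (NeZero.pos n) one_pos
  set lastI : Fin n := ⟨n - 1, hlast⟩ with hlastI
  -- key: b(update x lastI (nestBr b m y)) is in range of nestBr (m+1)
  have key : ∀ (m : ℕ) (x : Fin n → L) (y : Fin (m * (n - 1) + 1) → L),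
      b (Function.update x lastI (nestBr (⇑b) m y)) ∈ Set.range (nestBr (⇑b) (m + 1)) := by
    intro m x y
    refine ⟨fun j => if h : (j : ℕ) < n - 1 then x ⟨j, lt_trans h hlast⟩
      else y ⟨(j : ℕ) - (n - 1), by
        have h1 : (m + 1) * (n - 1) + 1 = (n - 1) + (m * (n - 1) + 1) := by ring
        have := j.isLt
        omega⟩, ?_⟩
    show b _ = b _
    congr 1
    funext j
    dsimp only
    by_cases h : (j : ℕ) < n - 1
    · rw [dif_pos h, dif_pos h,
        Function.update_of_ne (fun hj => by rw [hj] at h; simp [hlastI] at h)]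
    · have hj : j = lastI := Fin.ext (by have := j.isLt; simp [hlastI]; omega)
      rw [dif_neg h, hj, Function.update_self]
      congr 1
      funext i
      rw [dif_neg (by omega)]
      exact congrArg y (Fin.ext (show n - 1 + (i : ℕ) - (n - 1) = (i : ℕ) by omega))
  constructor
  · intro h
    suffices H : ∀ m, Submodule.span K (Set.range (nestBr (⇑b) m)) = ⊤ from H k
    intro m
    induction m with
    | zero =>
      rw [eq_top_iff]
      intro z _
      exact Submodule.subset_span ⟨fun _ => z, rfl⟩
    | succ m ih =>
      rw [eq_top_iff, ← h, Submodule.span_le]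
      rintro _ ⟨x, rfl⟩
      have hx : x lastI ∈ Submodule.span K (Set.range (nestBr (⇑b) m)) := by
        rw [ih]; trivial
      have : b x = (b.toLinearMap x lastI) (x lastI) := by
        simp [MultilinearMap.toLinearMap]
      show b x ∈ _
      rw [this]
      have hmem : (b.toLinearMap x lastI) (x lastI) ∈
          Submodule.map (b.toLinearMap x lastI)
            (Submodule.span K (Set.range (nestBr (⇑b) m))) :=
        Submodule.mem_map_of_mem hx
      rw [Submodule.map_span] at hmem
      refine Submodule.span_le.mpr ?_ hmem
      rintro _ ⟨_, ⟨y, rfl⟩, rfl⟩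
      exact Submodule.subset_span (key m x y)
  · intro h
    rw [eq_top_iff, ← h, Submodule.span_le]
    rintro _ ⟨a, rfl⟩
    obtain ⟨k', rfl⟩ : ∃ k', k = k' + 1 := ⟨k - 1, by omega⟩
    exact Submodule.subset_span ⟨_, rfl⟩
end

section
/- If L is a Leibniz n-algebra, then the (n-1)-fold tensor power L^{⊗(n-1)} is a Leibniz algebra with respect to the bracket [l_1⊗⋯⊗l_{n-1}, l'_1⊗⋯⊗l'_{n-1}] = Σ_{i=1}^{n-1} l_1⊗⋯⊗[l_i,l'_1,…,l'_{n-1}]⊗⋯⊗l_{n-1}. -/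
open Function TensorProduct

section Aux
variable {K L : Type*} [Field K] [AddCommGroup L] [Module K L] {m : ℕ}

/-- `v ↦ b (v, l'₁, …, l'ₘ)`, as a multilinear map in `l'` with values in `L →ₗ[K] L`. -/
noncomputable def Fmap (b : MultilinearMap K (fun _ : Fin (m + 1) => L) L) :
    MultilinearMap K (fun _ : Fin m => L) (L →ₗ[K] L) where
  toFun l' :=
    { toFun := fun v => b (Fin.cons v l')
      map_add' := fun x y => by
        have h : ∀ v : L, (Fin.cons v l' : Fin (m+1) → L) = Function.update (Fin.cons (0:L) l') 0 v := fun v => by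
          rw [Fin.update_cons_zero]
        rw [h x, h y, h (x + y), b.map_update_add]
      map_smul' := fun c x => by
        have h : ∀ v : L, (Fin.cons v l' : Fin (m+1) → L) = Function.update (Fin.cons (0:L) l') 0 v := fun v => by
          rw [Fin.update_cons_zero]
        simp only [RingHom.id_apply]
        rw [h x, h (c • x), b.map_update_smul] }
  map_update_add' {dec} l' j x y := by
    ext v
    simp only [LinearMap.coe_mk, AddHom.coe_mk, LinearMap.add_apply]
    have hdec : dec = instDecidableEqFin m := Subsingleton.elim _ _
    subst hdec
    rw [Fin.cons_update, Fin.cons_update, Fin.cons_update, b.map_update_add]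
  map_update_smul' {dec} l' j c x := by
    ext v
    simp only [LinearMap.coe_mk, AddHom.coe_mk, LinearMap.smul_apply]
    have hdec : dec = instDecidableEqFin m := Subsingleton.elim _ _
    subst hdec
    rw [Fin.cons_update, Fin.cons_update, b.map_update_smul]

@[simp] lemma Fmap_apply (b : MultilinearMap K (fun _ : Fin (m + 1) => L) L)
    (l' : Fin m → L) (v : L) : Fmap b l' v = b (Fin.cons v l') := rfl

/-- Apply `g` in the `i`-th slot of the tensor product. -/
noncomputable def Hmap (i : Fin m) (g : L →ₗ[K] L) :
    MultilinearMap K (fun _ : Fin m => L) (PiTensorProduct K fun _ : Fin m => L) :=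
  (PiTensorProduct.tprod K).compLinearMap (Function.update (fun _ => LinearMap.id) i g)

lemma Hmap_apply (i : Fin m) (g : L →ₗ[K] L) (l : Fin m → L) :
    Hmap i g l = PiTensorProduct.tprod K (Function.update l i (g (l i))) := by
  rw [Hmap, MultilinearMap.compLinearMap_apply]
  congr 1
  funext j
  rcases eq_or_ne j i with h | h
  · subst h; simp
  · simp [Function.update_of_ne h]

lemma Hmap_add (i : Fin m) (g h : L →ₗ[K] L) : Hmap i (g + h) = Hmap i g + Hmap i h := by
  ext l
  simp only [Hmap_apply, MultilinearMap.add_apply, LinearMap.add_apply]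
  rw [(PiTensorProduct.tprod K).map_update_add]

lemma Hmap_smul (i : Fin m) (c : K) (g : L →ₗ[K] L) : Hmap i (c • g) = c • Hmap i g := by
  ext l
  simp only [Hmap_apply, MultilinearMap.smul_apply, LinearMap.smul_apply]
  rw [(PiTensorProduct.tprod K).map_update_smul]

/-- The multilinear (in `l'`) family of multilinear (in `l`) maps
`(l, l') ↦ Σ_i l₁ ⊗ ⋯ ⊗ b(lᵢ, l') ⊗ ⋯ ⊗ lₘ`. -/
noncomputable def Gmap (b : MultilinearMap K (fun _ : Fin (m + 1) => L) L) :
    MultilinearMap K (fun _ : Fin m => L)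
      (MultilinearMap K (fun _ : Fin m => L) (PiTensorProduct K fun _ : Fin m => L)) where
  toFun l' := ∑ i, Hmap i (Fmap b l')
  map_update_add' {dec} l' j x y := by
    have hdec : dec = instDecidableEqFin m := Subsingleton.elim _ _
    subst hdec
    simp only [(Fmap b).map_update_add l' j x y, Hmap_add, Finset.sum_add_distrib]
  map_update_smul' {dec} l' j c x := by
    have hdec : dec = instDecidableEqFin m := Subsingleton.elim _ _
    subst hdec
    simp only [(Fmap b).map_update_smul l' j c x, Hmap_smul, Finset.smul_sum]

noncomputable def Bmap (b : MultilinearMap K (fun _ : Fin (m + 1) => L) L) :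
    PiTensorProduct K (fun _ : Fin m => L) →ₗ[K]
      PiTensorProduct K (fun _ : Fin m => L) →ₗ[K] PiTensorProduct K (fun _ : Fin m => L) :=
  (PiTensorProduct.lift
    ((PiTensorProduct.lift :
        MultilinearMap K (fun _ : Fin m => L) (PiTensorProduct K fun _ : Fin m => L) ≃ₗ[K] _
      ).toLinearMap.compMultilinearMap (Gmap b))).flip

lemma Bmap_tprod (b : MultilinearMap K (fun _ : Fin (m + 1) => L) L) (l l' : Fin m → L) :
    Bmap b (PiTensorProduct.tprod K l) (PiTensorProduct.tprod K l') =
      ∑ i, PiTensorProduct.tprod K (Function.update l i (b (Fin.cons (l i) l'))) := by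
  simp only [Bmap, LinearMap.flip_apply, PiTensorProduct.lift.tprod,
    LinearMap.compMultilinearMap_apply, LinearEquiv.coe_coe, Gmap, MultilinearMap.coe_mk,
    map_sum, MultilinearMap.sum_apply, PiTensorProduct.lift.tprod]
  simp [Hmap_apply]


set_option maxHeartbeats 1000000 in
lemma Bmap_key (b : MultilinearMap K (fun _ : Fin (m + 1) => L) L) (hb : FundId ⇑b)
    (l l' l'' : Fin m → L) :
    Bmap b (PiTensorProduct.tprod K l)
        (Bmap b (PiTensorProduct.tprod K l') (PiTensorProduct.tprod K l'')) =
      Bmap b (Bmap b (PiTensorProduct.tprod K l) (PiTensorProduct.tprod K l'))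
          (PiTensorProduct.tprod K l'') -
        Bmap b (Bmap b (PiTensorProduct.tprod K l) (PiTensorProduct.tprod K l''))
          (PiTensorProduct.tprod K l') := by
  classical
  simp only [Bmap_tprod, map_sum, LinearMap.sum_apply]
  rw [Finset.sum_comm]
  -- split off the diagonal of the double sums on the right
  have hsplit : ∀ f : Fin m → Fin m → PiTensorProduct K fun _ : Fin m => L,
      (∑ i, ∑ k, f i k) = ∑ i, f i i + ∑ i, ∑ k ∈ Finset.univ.erase i, f i k := by
    intro f
    rw [← Finset.sum_add_distrib]
    exact Finset.sum_congr rfl fun i _ => (Finset.add_sum_erase _ _ (Finset.mem_univ i)).symm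
  conv_rhs => rw [hsplit, hsplit]
  -- the diagonal of the first double sum, via the fundamental identity
  have hPd : ∀ i : Fin m,
      PiTensorProduct.tprod K
          (Function.update (Function.update l i (b (Fin.cons (l i) l'))) i
            (b (Fin.cons (Function.update l i (b (Fin.cons (l i) l')) i) l''))) =
        PiTensorProduct.tprod K
            (Function.update l i (b (Fin.cons (b (Fin.cons (l i) l'')) l'))) +
          ∑ j, PiTensorProduct.tprod K
            (Function.update l i
              (b (Fin.cons (l i) (Function.update l' j (b (Fin.cons (l' j) l'')))))) := by
    intro i
    rw [Function.update_idem, Function.update_self]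
    have hfi := hb (Fin.cons (l i) l') (Fin.cons 0 l'')
    simp only [Fin.update_cons_zero] at hfi
    rw [Fin.sum_univ_succ] at hfi
    simp only [Fin.cons_zero, Fin.cons_succ, Fin.update_cons_zero, ← Fin.cons_update] at hfi
    rw [hfi, (PiTensorProduct.tprod K).map_update_add, (PiTensorProduct.tprod K).map_update_sum]
  -- the diagonal of the second double sum
  have hQd : ∀ i : Fin m,
      PiTensorProduct.tprod K
          (Function.update (Function.update l i (b (Fin.cons (l i) l''))) i
            (b (Fin.cons (Function.update l i (b (Fin.cons (l i) l'')) i) l'))) =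
        PiTensorProduct.tprod K
          (Function.update l i (b (Fin.cons (b (Fin.cons (l i) l'')) l'))) := by
    intro i
    rw [Function.update_idem, Function.update_self]
  -- off-diagonal terms agree
  have hoff :
      (∑ i, ∑ k ∈ Finset.univ.erase i,
        PiTensorProduct.tprod K
          (Function.update (Function.update l i (b (Fin.cons (l i) l'))) k
            (b (Fin.cons (Function.update l i (b (Fin.cons (l i) l')) k) l'')))) =
      ∑ i, ∑ k ∈ Finset.univ.erase i,
        PiTensorProduct.tprod K
          (Function.update (Function.update l i (b (Fin.cons (l i) l''))) k
            (b (Fin.cons (Function.update l i (b (Fin.cons (l i) l'')) k) l'))) := by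
    rw [Finset.sum_comm' (t' := Finset.univ) (s' := fun k => Finset.univ.erase k)
      (fun x y => by simp [Finset.mem_erase]; tauto)]
    refine Finset.sum_congr rfl fun k _ => Finset.sum_congr rfl fun i hi => ?_
    have hik : i ≠ k := (Finset.mem_erase.mp hi).1
    rw [Function.update_of_ne hik.symm, Function.update_of_ne hik,
      Function.update_comm hik]
  simp only [hPd, hQd]
  rw [Finset.sum_add_distrib, hoff]
  abel

lemma Bmap_leibniz (b : MultilinearMap K (fun _ : Fin (m + 1) => L) L) (hb : FundId ⇑b)
    (x y z : PiTensorProduct K fun _ : Fin m => L) :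
    Bmap b x (Bmap b y z) = Bmap b (Bmap b x y) z - Bmap b (Bmap b x z) y := by
  induction x using PiTensorProduct.induction_on with
  | add a a' ha ha' =>
    simp only [map_add, LinearMap.add_apply, ha, ha']
    abel
  | smul_tprod r l =>
    induction y using PiTensorProduct.induction_on with
    | add c c' hc hc' =>
      simp only [map_add, LinearMap.add_apply, hc, hc']
      abel
    | smul_tprod s l' =>
      induction z using PiTensorProduct.induction_on with
      | add d d' hd hd' =>
        simp only [map_add, LinearMap.add_apply, hd, hd']
        abel
      | smul_tprod t l'' =>
        simp only [map_smul, LinearMap.smul_apply, Bmap_key b hb, smul_sub]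
        module

end Aux

/-- if `L` is a Leibniz `n`-algebra (`n = m+1`), then `L^{⊗(n-1)}` is a
Leibniz algebra with `[l_1⊗⋯⊗l_{n-1}, l'_1⊗⋯⊗l'_{n-1}] = Σ_i l_1⊗⋯⊗[l_i,l'_1,…,l'_{n-1}]⊗⋯⊗l_{n-1}`. -/
theorem daletskii_takhtajan {K L : Type*} [Field K] [AddCommGroup L] [Module K L]
    (m : ℕ) (hm : 1 ≤ m)
    (b : MultilinearMap K (fun _ : Fin (m + 1) => L) L) (hb : FundId ⇑b) :
    ∃ B : PiTensorProduct K (fun _ : Fin m => L) →ₗ[K]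
          PiTensorProduct K (fun _ : Fin m => L) →ₗ[K]
          PiTensorProduct K (fun _ : Fin m => L),
      (∀ l l' : Fin m → L,
        B (PiTensorProduct.tprod K l) (PiTensorProduct.tprod K l') =
          ∑ i : Fin m,
            PiTensorProduct.tprod K (Function.update l i (b (Fin.cons (l i) l')))) ∧
      ∀ x y z, B x (B y z) = B (B x y) z - B (B x z) y := by
  classical
  exact ⟨Bmap b, fun l l' => Bmap_tprod b l l', fun x y z => Bmap_leibniz b hb x y z⟩
end

section
/- Let L be a Leibniz q-algebra, where q = κ(p-1)+1. Then L^{⊗κ} is a Leibniz p-algebra with respect to the bracket [l_{11}⊗⋯⊗l_{1κ}, …, l_{p1}⊗⋯⊗l_{pκ}] = Σ_{i=1}^{κ} l_{11}⊗⋯⊗[l_{1i}, l_{21},…,l_{2κ},…,l_{p1},…,l_{pκ}]⊗⋯⊗l_{1κ}. -/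
open Function TensorProduct

/-!
Write `R_y = [·, y_1, …, y_{q-1}]` for the right multiplications of `L`. The fundamental identity
says exactly that `⁅R_y, R_x⁆ = Σ_j R_{x with x_j replaced by R_y x_j}`: each `R_y` acts as a
derivation on the family of right multiplications. Extend an endomorphism `f` of `L` to the
derivation `δ f = Σ_n id ⊗ ⋯ ⊗ f ⊗ ⋯ ⊗ id` of `L^{⊗κ}`; then `δ` preserves commutators. The new
right multiplication by `t_2, …, t_p` is `δ R_y`, where `y` lists the `κ(p-1)` factors of the
`t_i`, and applying `δ R_y` to one factor of some `t_j` substitutes `R_y` into the corresponding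
entry of `y`. So the identity for `L` transports to `L^{⊗κ}`; by multilinearity it suffices to check
it on pure tensors.
-/

lemma Module.End.mulSingle_apply_eq_update {R M ι : Type*} [Semiring R] [AddCommMonoid M]
    [Module R M] [DecidableEq ι] (n : ι) (f : Module.End R M) (μ : ι → M) :
    (fun i => (Pi.mulSingle n f : ι → Module.End R M) i (μ i)) = update μ n (f (μ n)) := by
  funext i
  rcases eq_or_ne i n with rfl | h <;> simp [*]

namespace PiTensorProduct

variable {R ι M : Type*} [CommRing R] [AddCommGroup M] [Module R M] [Fintype ι]
  [DecidableEq ι]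

noncomputable def tensorDerivation : Module.End R M →ₗ[R] Module.End R (⨂[R] _ : ι, M) :=
  ∑ n, (mapMultilinear R (fun _ : ι => M) (fun _ => M)).toLinearMap 1 n

lemma tensorDerivation_apply (f : Module.End R M) :
    tensorDerivation (ι := ι) f = ∑ n, map (Pi.mulSingle n f) := by
  simp [tensorDerivation, Pi.mulSingle]

lemma tensorDerivation_tprod (f : Module.End R M) (μ : ι → M) :
    tensorDerivation (ι := ι) f (tprod R μ) = ∑ n, tprod R (update μ n (f (μ n))) := by
  simp only [tensorDerivation_apply, LinearMap.sum_apply, map_tprod,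
    Module.End.mulSingle_apply_eq_update]

lemma tensorDerivation_lie (f g : Module.End R M) :
    tensorDerivation (ι := ι) ⁅f, g⁆ = ⁅tensorDerivation (ι := ι) f, tensorDerivation g⁆ := by
  let F n : ι → Module.End R M := Pi.mulSingle n f
  let G n : ι → Module.End R M := Pi.mulSingle n g
  have hcomm : ∀ n t, n ≠ t → map (F n) * map (G t) = map (G t) * map (F n) := fun n t h => by
    rw [← PiTensorProduct.map_mul, ← PiTensorProduct.map_mul]
    exact congrArg map (Pi.mulSingle_commute (f := fun _ => Module.End R M) h f g).eq
  have hdiag (n) (f g : Module.End R M) :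
      map (Pi.mulSingle n (f * g) : ι → Module.End R M) =
        map (Pi.mulSingle n f : ι → Module.End R M) *
          map (Pi.mulSingle n g : ι → Module.End R M) := by
    rw [Pi.mulSingle_mul]
    exact PiTensorProduct.map_mul _ _
  simp only [Ring.lie_def, map_sub, tensorDerivation_apply, hdiag, Finset.sum_mul_sum]
  rw [Finset.sum_comm (f := fun i j : ι => map (G i) * map (F j))]
  simp only [← Finset.sum_sub_distrib]
  refine Finset.sum_congr rfl fun n _ => ?_
  rw [Finset.sum_eq_single n (fun t _ ht => sub_eq_zero.2 (hcomm n t ht.symm)) (by simp)]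

end PiTensorProduct

namespace MultilinearMap

variable {R M N ι : Type*} [CommSemiring R] [AddCommMonoid M] [Module R M]
  [AddCommMonoid N] [Module R N] {n : ℕ}

def rightMul (b : MultilinearMap R (fun _ : Fin (n + 1) => M) N) :
    MultilinearMap R (fun _ : Fin n => M) (M →ₗ[R] N) where
  toFun a :=
    { toFun z := b (Fin.cons z a)
      map_add' z z' := b.cons_add a z z'
      map_smul' c z := b.cons_smul a c z }
  map_update_add' {inst} a i x y := by
    obtain rfl : inst = instDecidableEqFin n := Subsingleton.elim _ _
    ext z
    simp [Fin.cons_update]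
  map_update_smul' {inst} a i c x := by
    obtain rfl : inst = instDecidableEqFin n := Subsingleton.elim _ _
    ext z
    simp [Fin.cons_update]

@[simp] lemma rightMul_apply (b : MultilinearMap R (fun _ : Fin (n + 1) => M) N)
    (a : Fin n → M) (z : M) : b.rightMul a z = b (Fin.cons z a) := rfl

def ofRightMul (C : MultilinearMap R (fun _ : Fin n => M) (M →ₗ[R] N)) :
    MultilinearMap R (fun _ : Fin (n + 1) => M) N :=
  LinearMap.uncurryLeft
    { toFun z := (LinearMap.applyₗ z).compMultilinearMap C
      map_add' z z' := by ext; simp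
      map_smul' c z := by ext; simp }

def finSuccProdEquiv (m : ℕ) (ι : Type*) : Fin (m + 1) × ι ≃ ι ⊕ Fin m × ι where
  toFun x := Fin.cases (Sum.inl x.2) (fun j => Sum.inr (j, x.2)) x.1
  invFun := Sum.elim (fun i => (0, i)) (fun x => (x.1.succ, x.2))
  left_inv := by rintro ⟨j, i⟩; cases j using Fin.cases <;> rfl
  right_inv := by rintro (i | ⟨j, i⟩) <;> rfl

noncomputable def tensorBlocks : (m : ℕ) →
    MultilinearMap R (fun _ : Fin m × ι => M) N →ₗ[R]
      MultilinearMap R (fun _ : Fin m => ⨂[R] _ : ι, M) N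
  | 0 =>
    { toFun F := constOfIsEmpty R _ (F default)
      map_add' _ _ := rfl
      map_smul' _ _ := rfl }
  | m + 1 =>
    (multilinearCurryLeftEquiv R (fun _ : Fin (m + 1) => ⨂[R] _ : ι, M) N).symm.toLinearMap ∘ₗ
      LinearMap.llcomp R _ _ _ (tensorBlocks m) ∘ₗ PiTensorProduct.lift.toLinearMap ∘ₗ
      currySumEquiv.toLinearMap ∘ₗ
      (domDomCongrLinearEquiv R R M N (finSuccProdEquiv m ι)).toLinearMap

theorem tensorBlocks_tprod {m : ℕ} (F : MultilinearMap R (fun _ : Fin m × ι => M) N)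
    (l : Fin m → ι → M) :
    tensorBlocks m F (fun j => PiTensorProduct.tprod R (l j)) = F (uncurry l) := by
  induction m with
  | zero => exact congrArg F (Subsingleton.elim _ _)
  | succ m ih =>
    change tensorBlocks m (PiTensorProduct.lift (F.domDomCongr (finSuccProdEquiv m ι)).currySum
      (PiTensorProduct.tprod R (l 0))) (fun j => PiTensorProduct.tprod R (l j.succ)) = _
    rw [PiTensorProduct.lift.tprod, ih, currySum_apply', domDomCongr_apply]
    congr 1
    funext ⟨j, i⟩
    cases j using Fin.cases <;> rfl

end MultilinearMap

section LeibnizRightMul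

variable {R M ι : Type*} [CommRing R] [AddCommGroup M] [Module R M] [Fintype ι] [DecidableEq ι]

def IsLeibnizRightMul (C : (ι → M) → Module.End R M) : Prop :=
  ∀ r s, ⁅C r, C s⁆ = ∑ j, C (update s j (C r (s j)))

lemma isLeibnizRightMul_iff (C : (ι → M) → Module.End R M) :
    IsLeibnizRightMul C ↔
      ∀ r s u, C r (C s u) = C s (C r u) + ∑ j, C (update s j (C r (s j))) u := by
  simp only [IsLeibnizRightMul, LinearMap.ext_iff, Ring.lie_def, sub_eq_iff_eq_add',
    LinearMap.add_apply, Module.End.mul_apply, LinearMap.sum_apply]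

theorem fundId_iff_isLeibnizRightMul {n : ℕ} (C : (Fin n → M) → Module.End R M) :
    FundId (fun v : Fin (n + 1) → M => C (Fin.tail v) (v 0)) ↔ IsLeibnizRightMul C := by
  have hne (j : Fin n) : (0 : Fin (n + 1)) ≠ j.succ := (Fin.succ_ne_zero j).symm
  simp only [FundId, isLeibnizRightMul_iff, Fin.sum_univ_succ, Fin.tail_update_zero,
    Fin.tail_update_succ, update_self, update_of_ne (hne _)]
  refine ⟨fun h r s u => ?_, fun h x y => h _ _ _⟩
  simpa using h (Fin.cons u s) (Fin.cons 0 r)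

lemma IsLeibnizRightMul.comp_equiv {ι' : Type*} [Fintype ι'] [DecidableEq ι']
    {C : (ι → M) → Module.End R M} (hC : IsLeibnizRightMul C) (σ : ι ≃ ι') :
    IsLeibnizRightMul fun v : ι' → M => C (v ∘ σ) := by
  intro r s
  rw [hC, ← σ.sum_comp]
  refine Finset.sum_congr rfl fun j _ => ?_
  dsimp only
  rw [update_comp_equiv, σ.symm_apply_apply]
  rfl

theorem isLeibnizRightMul_of_span {γ : Type*}
    (C : MultilinearMap R (fun _ : ι => M) (Module.End R M))
    {g : γ → M} (hg : Submodule.span R (Set.range g) = ⊤)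
    (h : ∀ r s : ι → γ,
      ⁅C (g ∘ r), C (g ∘ s)⁆ = ∑ j, C (update (g ∘ s) j (C (g ∘ r) (g (s j))))) :
    IsLeibnizRightMul ⇑C := by
  let commutator : Module.End R M →ₗ[R] Module.End R M →ₗ[R] Module.End R M :=
    LinearMap.mul R _ - (LinearMap.mul R _).flip
  have commutator_apply (f f' : Module.End R M) : commutator f f' = ⁅f, f'⁆ := by
    simp [commutator, Ring.lie_def]
  -- both sides are multilinear in `s`, and then in `r`, so it suffices that they agree on `g`
  have extend_right (r : ι → M)
      (hr : ∀ s : ι → γ, ⁅C r, C (g ∘ s)⁆ = ∑ j, C (update (g ∘ s) j (C r (g (s j)))))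
      (s : ι → M) : ⁅C r, C s⁆ = ∑ j, C (update s j (C r (s j))) := by
    have := MultilinearMap.ext_of_span_eq_top (g := fun _ => g) (fun _ => hg)
      (φ := (commutator (C r)).compMultilinearMap C)
      (φ' := ∑ j, C.compLinearMap (Pi.mulSingle j (C r))) (fun s => by
        simpa [commutator_apply, Module.End.mulSingle_apply_eq_update, comp_def] using hr s)
    simpa [commutator_apply, Module.End.mulSingle_apply_eq_update] using
      DFunLike.congr_fun this s
  intro r s
  have := MultilinearMap.ext_of_span_eq_top (g := fun _ => g) (fun _ => hg)
    (φ := (commutator.flip (C s)).compMultilinearMap C)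
    (φ' := ∑ j, (C.toLinearMap s j ∘ₗ LinearMap.applyₗ (s j)).compMultilinearMap C) (fun r => by
      simpa [commutator_apply, comp_def] using extend_right _ (h r) s)
  simpa [commutator_apply] using DFunLike.congr_fun this r

theorem IsLeibnizRightMul.tensorBlocks {m : ℕ}
    {C : MultilinearMap R (fun _ : Fin m × ι => M) (Module.End R M)} (hC : IsLeibnizRightMul ⇑C) :
    IsLeibnizRightMul ⇑(MultilinearMap.tensorBlocks m
      ((PiTensorProduct.tensorDerivation (ι := ι)).compMultilinearMap C)) := by
  set T := MultilinearMap.tensorBlocks m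
    ((PiTensorProduct.tensorDerivation (ι := ι)).compMultilinearMap C)
  have hT (l : Fin m → ι → M) :
      T (fun j => PiTensorProduct.tprod R (l j)) =
        PiTensorProduct.tensorDerivation (C (uncurry l)) :=
    MultilinearMap.tensorBlocks_tprod _ l
  refine isLeibnizRightMul_of_span _
    (PiTensorProduct.span_tprod_eq_top (R := R) (s := fun _ : ι => M)) fun ρ σ => ?_
  simp only [comp_def]
  rw [hT, hT, ← PiTensorProduct.tensorDerivation_lie, hC, _root_.map_sum, Fintype.sum_prod_type]
  refine Finset.sum_congr rfl fun j _ => ?_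
  rw [PiTensorProduct.tensorDerivation_tprod, MultilinearMap.map_update_sum]
  refine Finset.sum_congr rfl fun n _ => ?_
  rw [← uncurry_update_update, ← hT]
  exact congrArg T (comp_update _ σ j _)

end LeibnizRightMul

/-- if `L` is a Leibniz `q`-algebra, `q = κ*(p-1)+1`, then `L^{⊗κ}` is a
Leibniz `p`-algebra with the generalized Daletskii–Takhtajan bracket. -/
theorem daletskii_takhtajan_general {K L : Type*} [Field K] [AddCommGroup L] [Module K L]
    (p κ : ℕ) [NeZero p] (hp : 2 ≤ p) (hκ : 1 ≤ κ)
    (b : MultilinearMap K (fun _ : Fin (κ * (p - 1) + 1) => L) L) (hb : FundId ⇑b) :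
    ∃ B : MultilinearMap K (fun _ : Fin p => PiTensorProduct K (fun _ : Fin κ => L))
        (PiTensorProduct K (fun _ : Fin κ => L)),
      (∀ ls : Fin p → Fin κ → L,
        B (fun j => PiTensorProduct.tprod K (ls j)) =
          ∑ i : Fin κ,
            PiTensorProduct.tprod K (Function.update (ls 0) i
              (b fun j : Fin (κ * (p - 1) + 1) =>
                if (j : ℕ) = 0 then ls 0 i
                else
                  ls ⟨((j : ℕ) - 1) / κ + 1, by
                        have h2 : ((j : ℕ) - 1) / κ < p - 1 :=
                          Nat.div_lt_of_lt_mul (by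
                            have := j.isLt
                            have h3 : κ * (p - 1) + 1 = (p - 1) * κ + 1 := by ring
                            have h4 : 1 * 1 ≤ (p - 1) * κ :=
                              Nat.mul_le_mul (by omega) (by omega)
                            omega)
                        omega⟩
                     ⟨((j : ℕ) - 1) % κ, Nat.mod_lt _ (by omega)⟩))) ∧
      FundId ⇑B := by
  obtain ⟨m, rfl⟩ := Nat.exists_eq_add_one_of_ne_zero (NeZero.ne p)
  -- the arity `κ * (m + 1 - 1) + 1` of `b` reduces to `κ * m + 1` only up to defeq
  let b' : MultilinearMap K (fun _ : Fin (κ * m + 1) => L) L := b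
  let blocks : Fin m × Fin κ ≃ Fin (κ * m) := finProdFinEquiv.trans (finCongr (Nat.mul_comm m κ))
  have hb' : FundId ⇑b' := hb
  have hR : IsLeibnizRightMul ⇑b'.rightMul := (fundId_iff_isLeibnizRightMul _).1 (by
    simpa only [MultilinearMap.rightMul_apply, Fin.cons_self_tail] using hb')
  let T := MultilinearMap.tensorBlocks m
    ((PiTensorProduct.tensorDerivation (ι := Fin κ)).compMultilinearMap
      (b'.rightMul.domDomCongr blocks.symm))
  have hT : IsLeibnizRightMul ⇑T := IsLeibnizRightMul.tensorBlocks (hR.comp_equiv blocks.symm)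
  refine ⟨T.ofRightMul, fun ls => ?_, (fundId_iff_isLeibnizRightMul _).2 hT⟩
  change T (fun j => PiTensorProduct.tprod K (ls j.succ)) (PiTensorProduct.tprod K (ls 0)) = _
  rw [MultilinearMap.tensorBlocks_tprod, LinearMap.compMultilinearMap_apply,
    PiTensorProduct.tensorDerivation_tprod]
  refine Finset.sum_congr rfl fun i _ => congrArg _ (congrArg _ (congrArg b (funext fun j => ?_)))
  cases j using Fin.cases with
  | zero => rfl
  | succ w =>
    -- `blocks.symm w` is `(w / κ, w % κ)` by definition
    simp only [Fin.cons_succ, Fin.val_succ, Nat.add_sub_cancel, Nat.add_one_ne_zero, if_false]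
    rfl
end

section
/- The four-dimensional Lie 3-algebra L with basis {e_1,e_2,e_3,e_4} and skew-symmetric ternary bracket [e_1,e_2,e_3]=e_4, [e_1,e_2,e_4]=−e_3, [e_1,e_3,e_4]=e_2, [e_2,e_3,e_4]=−e_1 is perfect, but the Leibniz algebra D_3(L) = L⊗L with bracket [a⊗b, c⊗d] = [a,c,d]⊗b + a⊗[b,c,d] is not perfect; in particular e_1⊗e_1 is not contained in [L⊗L, L⊗L]. -/
/-!
The standard bilinear form `⟨x, y⟩ = Σ xᵢ yᵢ` of the basis `e` is invariant under the bracket,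
`⟨[x,z,w], y⟩ + ⟨x, [y,z,w]⟩ = 0`: the bracket is the four-dimensional cross product, so
`⟨[x,y,z], w⟩ = det(x,y,z,w)`, which changes sign when `x` and `w` are swapped. Hence the linear
functional `a ⊗ b ↦ ⟨a, b⟩` on `L ⊗ L` kills every bracket `[a ⊗ b, c ⊗ d]`, while it takes the
value `1` on `e₁ ⊗ e₁`. Perfectness of `L` is immediate, since every basis vector is `±` a bracket.
-/

open Function TensorProduct

namespace Module.Basis

variable {ι R M : Type*} [CommSemiring R] [AddCommMonoid M] [Module R M] [DecidableEq ι]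

lemma toDual_comm (e : Basis ι R M) (x y : M) : e.toDual x y = e.toDual y x := by
  have h : e.toDual.flip = e.toDual :=
    LinearMap.ext_basis e e fun i j => by simp [toDual_apply, eq_comm]
  exact LinearMap.congr_fun₂ h y x

end Module.Basis

def IsInvariantForm {R M : Type*} [CommSemiring R] [AddCommMonoid M] [Module R M]
    (b : MultilinearMap R (fun _ : Fin 3 => M) M) (β : M →ₗ[R] M →ₗ[R] R) : Prop :=
  ∀ x y z w, β (b ![x, z, w]) y + β x (b ![y, z, w]) = 0

section InvariantForm

variable {R M : Type*} [CommSemiring R] [AddCommMonoid M] [Module R M]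
  {b : MultilinearMap R (fun _ : Fin 3 => M) M} {β : M →ₗ[R] M →ₗ[R] R}

lemma IsInvariantForm.of_basis {ι : Type*} [Fintype ι] [DecidableEq ι] (e : Module.Basis ι R M)
    (h : ∀ i j k l, e.repr (b ![e i, e j, e k]) l + e.repr (b ![e l, e j, e k]) i = 0) :
    IsInvariantForm b e.toDual := by
  have init_eq (u : Fin 4 → M) : Fin.init u = ![u 0, u 1, u 2] := by
    ext i; fin_cases i <;> rfl
  -- `T v = ⟨[v 0, v 1, v 2], v 3⟩`; invariance says `T` is antisymmetric in `v 0` and `v 3`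
  let T : MultilinearMap R (fun _ : Fin 4 => M) R := (e.toDual.compMultilinearMap b).uncurryRight
  have hT : T + T.domDomCongr (Equiv.swap 0 3) = 0 := by
    refine Module.Basis.ext_multilinear (fun _ => e) fun v => ?_
    simp [T, init_eq, Equiv.swap_apply_of_ne_of_ne, e.toDual_apply_left, h]
  intro x y z w
  have := congr($hT ![x, z, w, y])
  simpa [T, init_eq, Equiv.swap_apply_of_ne_of_ne, e.toDual_comm x] using this

lemma IsInvariantForm.lift_apply_eq_zero (hβ : IsInvariantForm b β)
    {B : M ⊗[R] M →ₗ[R] M ⊗[R] M →ₗ[R] M ⊗[R] M}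
    (hB : ∀ x y z w, B (x ⊗ₜ y) (z ⊗ₜ w) = b ![x, z, w] ⊗ₜ y + x ⊗ₜ b ![y, z, w])
    (u v : M ⊗[R] M) : lift β (B u v) = 0 := by
  have h : B.compr₂ (lift β) = 0 :=
    TensorProduct.ext' fun x y => TensorProduct.ext' fun z w => by simp [hB, hβ x y z w]
  exact LinearMap.congr_fun₂ h u v

lemma IsInvariantForm.span_le_ker_lift (hβ : IsInvariantForm b β)
    {B : M ⊗[R] M →ₗ[R] M ⊗[R] M →ₗ[R] M ⊗[R] M}
    (hB : ∀ x y z w, B (x ⊗ₜ y) (z ⊗ₜ w) = b ![x, z, w] ⊗ₜ y + x ⊗ₜ b ![y, z, w]) :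
    Submodule.span R {t | ∃ u v, t = B u v} ≤ LinearMap.ker (lift β) := by
  rw [Submodule.span_le]
  rintro _ ⟨u, v, rfl⟩
  exact hβ.lift_apply_eq_zero hB u v

end InvariantForm

section SkewBracket

variable {R M : Type*} [Semiring R] [AddCommGroup M] [Module R M]
  {b : MultilinearMap R (fun _ : Fin 3 => M) M}

lemma bracket_swap₀₁
    (hskew : ∀ (σ : Equiv.Perm (Fin 3)) (v : Fin 3 → M), b (v ∘ σ) = (Equiv.Perm.sign σ : ℤ) • b v)
    (x y z : M) : b ![x, y, z] = -b ![y, x, z] := by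
  have h := hskew (Equiv.swap 0 1) ![y, x, z]
  rw [Equiv.Perm.sign_swap (by decide)] at h
  convert h using 2
  · ext i; fin_cases i <;> rfl
  · simp

lemma bracket_swap₁₂
    (hskew : ∀ (σ : Equiv.Perm (Fin 3)) (v : Fin 3 → M), b (v ∘ σ) = (Equiv.Perm.sign σ : ℤ) • b v)
    (x y z : M) : b ![x, y, z] = -b ![x, z, y] := by
  have h := hskew (Equiv.swap 1 2) ![x, z, y]
  rw [Equiv.Perm.sign_swap (by decide)] at h
  convert h using 2
  · ext i; fin_cases i <;> rfl
  · simp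

end SkewBracket

section Dim4

variable {K L : Type*} [CommRing K] [AddCommGroup L] [Module K L]
  {b : MultilinearMap K (fun _ : Fin 3 => L) L} {e : Module.Basis (Fin 4) K L}

lemma span_range_bracket_eq_top
    (h123 : b ![e 0, e 1, e 2] = e 3) (h124 : b ![e 0, e 1, e 3] = -e 2)
    (h134 : b ![e 0, e 2, e 3] = e 1) (h234 : b ![e 1, e 2, e 3] = -e 0) :
    Submodule.span K (Set.range fun a : Fin 3 → L => b a) = ⊤ := by
  have mem (a : Fin 3 → L) : b a ∈ Submodule.span K (Set.range fun a : Fin 3 → L => b a) :=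
    Submodule.subset_span ⟨a, rfl⟩
  refine eq_top_iff.2 (e.span_eq ▸ Submodule.span_le.2 ?_)
  rintro _ ⟨i, rfl⟩
  fin_cases i
  · simpa [h234] using neg_mem (mem ![e 1, e 2, e 3])
  · simpa [h134] using mem ![e 0, e 2, e 3]
  · simpa [h124] using neg_mem (mem ![e 0, e 1, e 3])
  · simpa [h123] using mem ![e 0, e 1, e 2]

set_option maxHeartbeats 1000000 in
lemma repr_bracket_basis_add_repr_bracket_basis_eq_zero
    (hskew : ∀ (σ : Equiv.Perm (Fin 3)) (v : Fin 3 → L), b (v ∘ σ) = (Equiv.Perm.sign σ : ℤ) • b v)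
    (h123 : b ![e 0, e 1, e 2] = e 3) (h124 : b ![e 0, e 1, e 3] = -e 2)
    (h134 : b ![e 0, e 2, e 3] = e 1) (h234 : b ![e 1, e 2, e 3] = -e 0)
    (hrep : ∀ i j k : Fin 4, (i = j ∨ i = k ∨ j = k) → b ![e i, e j, e k] = 0)
    (i j k l : Fin 4) :
    e.repr (b ![e i, e j, e k]) l + e.repr (b ![e l, e j, e k]) i = 0 := by
  -- the side conditions `j < i`, `k < j` make `simp` sort the arguments instead of looping
  have sort₀₁ (i j k : Fin 4) (_ : j < i) : b ![e i, e j, e k] = -b ![e j, e i, e k] :=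
    bracket_swap₀₁ hskew _ _ _
  have sort₁₂ (i j k : Fin 4) (_ : k < j) : b ![e i, e j, e k] = -b ![e i, e k, e j] :=
    bracket_swap₁₂ hskew _ _ _
  have rep₀₁ (i k : Fin 4) : b ![e i, e i, e k] = 0 := hrep i i k (Or.inl rfl)
  have rep₁₂ (i j : Fin 4) : b ![e i, e j, e j] = 0 := hrep i j j (Or.inr (Or.inr rfl))
  fin_cases i <;> fin_cases j <;> fin_cases k <;> fin_cases l <;>
    simp [sort₀₁, sort₁₂, rep₀₁, rep₁₂, h123, h124, h134, h234]

end Dim4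

theorem dim4_lie3_not_perfect_tensor_general {K L : Type*} [Field K] [AddCommGroup L] [Module K L]
    (b : MultilinearMap K (fun _ : Fin 3 => L) L)
    (e : Module.Basis (Fin 4) K L)
    (hskew : ∀ (σ : Equiv.Perm (Fin 3)) (v : Fin 3 → L),
      b (v ∘ σ) = (Equiv.Perm.sign σ : ℤ) • b v)
    (h123 : b ![e 0, e 1, e 2] = e 3)
    (h124 : b ![e 0, e 1, e 3] = - e 2)
    (h134 : b ![e 0, e 2, e 3] = e 1)
    (h234 : b ![e 1, e 2, e 3] = - e 0)
    (hrep : ∀ i j k : Fin 4, (i = j ∨ i = k ∨ j = k) → b ![e i, e j, e k] = 0) :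
    Submodule.span K (Set.range fun a : Fin 3 → L => b a) = ⊤ ∧
    ∀ B : L ⊗[K] L →ₗ[K] L ⊗[K] L →ₗ[K] L ⊗[K] L,
      (∀ x y z w : L, B (x ⊗ₜ[K] y) (z ⊗ₜ[K] w) =
        b ![x, z, w] ⊗ₜ[K] y + x ⊗ₜ[K] b ![y, z, w]) →
      e 0 ⊗ₜ[K] e 0 ∉ Submodule.span K {t : L ⊗[K] L | ∃ u v, t = B u v} ∧
      Submodule.span K {t : L ⊗[K] L | ∃ u v, t = B u v} ≠ ⊤ := by
  refine ⟨span_range_bracket_eq_top h123 h124 h134 h234, fun B hB => ?_⟩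
  have hinv : IsInvariantForm b e.toDual := .of_basis e
    (repr_bracket_basis_add_repr_bracket_basis_eq_zero hskew h123 h124 h134 h234 hrep)
  have hnot : e 0 ⊗ₜ[K] e 0 ∉ Submodule.span K {t : L ⊗[K] L | ∃ u v, t = B u v} := by
    intro hmem
    simpa [Module.Basis.toDual_apply] using hinv.span_le_ker_lift hB hmem
  exact ⟨hnot, fun htop => hnot (htop ▸ Submodule.mem_top)⟩

/-- the 4-dimensional Lie 3-algebra with `[e_1,e_2,e_3]=e_4`,
`[e_1,e_2,e_4]=-e_3`, `[e_1,e_3,e_4]=e_2`, `[e_2,e_3,e_4]=-e_1` (skew-symmetric, zero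
elsewhere) is perfect, but `D_3(L) = L⊗L` with `[a⊗b,c⊗d] = [a,c,d]⊗b + a⊗[b,c,d]`
is not a perfect Leibniz algebra; in particular `e_1⊗e_1 ∉ [L⊗L, L⊗L]`. -/
theorem dim4_lie3_not_perfect_tensor {K L : Type*} [Field K] [AddCommGroup L] [Module K L]
    (b : MultilinearMap K (fun _ : Fin 3 => L) L) (hFI : FundId ⇑b)
    (e : Module.Basis (Fin 4) K L)
    (hskew : ∀ (σ : Equiv.Perm (Fin 3)) (v : Fin 3 → L),
      b (v ∘ σ) = (Equiv.Perm.sign σ : ℤ) • b v)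
    (h123 : b ![e 0, e 1, e 2] = e 3)
    (h124 : b ![e 0, e 1, e 3] = - e 2)
    (h134 : b ![e 0, e 2, e 3] = e 1)
    (h234 : b ![e 1, e 2, e 3] = - e 0)
    (hrep : ∀ i j k : Fin 4, (i = j ∨ i = k ∨ j = k) → b ![e i, e j, e k] = 0) :
    Submodule.span K (Set.range fun a : Fin 3 → L => b a) = ⊤ ∧
    ∀ B : L ⊗[K] L →ₗ[K] L ⊗[K] L →ₗ[K] L ⊗[K] L,
      (∀ x y z w : L, B (x ⊗ₜ[K] y) (z ⊗ₜ[K] w) =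
        b ![x, z, w] ⊗ₜ[K] y + x ⊗ₜ[K] b ![y, z, w]) →
      e 0 ⊗ₜ[K] e 0 ∉ Submodule.span K {t : L ⊗[K] L | ∃ u v, t = B u v} ∧
      Submodule.span K {t : L ⊗[K] L | ∃ u v, t = B u v} ≠ ⊤ :=
  dim4_lie3_not_perfect_tensor_general b e hskew h123 h124 h134 h234 hrep
end

section
/- Let K contain the rationals and let L be the three-dimensional Leibniz 3-algebra with basis {e_1,e_2,e_3} and ternary bracket [e_1,e_1,e_2] = α e_1, [e_2,e_1,e_2] = −α e_2, [e_3,e_1,e_2] = β e_3 (α, β nonzero scalars) and zero otherwise. Then L is perfect, but the Leibniz algebra L⊗L (with the Daletskii–Takhtajan bracket) is not perfect: e_1⊗e_2 is not in the span of the commutators [e_i⊗e_j, e_k⊗e_l]. -/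
open Function TensorProduct

/-!
The bracket `[e_i, e_0, e_1]` acts diagonally on the basis with eigenvalues `c_i = α, -α, β`, which
are nonzero, so every `e_i` is a multiple of a bracket and `L` is perfect. In `L ⊗ L` the only
nonzero brackets of basis tensors are `[e_i ⊗ e_j, e_0 ⊗ e_1] = (c_i + c_j) e_i ⊗ e_j`, and
`c_0 + c_1 = α - α = 0`: the `e_0 ⊗ e_1`-coordinate vanishes on every bracket, hence on their span.
-/

section

variable {K L ι : Type*} [Field K] [AddCommGroup L] [Module K L]

theorem span_range_eq_top_of_smul_basis_mem {X : Type*} (f : X → L) (e : Module.Basis ι K L)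
    (c : ι → K) (hc : ∀ i, c i ≠ 0) (h : ∀ i, c i • e i ∈ Set.range f) :
    Submodule.span K (Set.range f) = ⊤ := by
  rw [eq_top_iff, ← e.span_eq, Submodule.span_le]
  rintro _ ⟨i, rfl⟩
  exact (Submodule.smul_mem_iff _ (hc i)).1 (Submodule.subset_span (h i))

theorem span_setOf_apply₂_le_ker_of_basis {M N : Type*} [AddCommGroup M] [Module K M]
    [AddCommGroup N] [Module K N] (v : Module.Basis ι K M) (B : M →ₗ[K] M →ₗ[K] N)
    (φ : N →ₗ[K] K) (h : ∀ i j, φ (B (v i) (v j)) = 0) :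
    Submodule.span K {t : N | ∃ u w, t = B u w} ≤ LinearMap.ker φ := by
  have hφB : B.compr₂ φ = 0 := LinearMap.ext_basis v v h
  rw [Submodule.span_le]
  rintro _ ⟨u, w, rfl⟩
  exact LinearMap.congr_fun₂ hφB u w

theorem Module.Basis.coord_tensorProduct_smul_tmul_add_tmul_smul (e : Module.Basis ι K L)
    (c : ι → K) {p q : ι} (hpq : c p + c q = 0) (i j : ι) :
    (e.tensorProduct e).coord (p, q) ((c i • e i) ⊗ₜ[K] e j + e i ⊗ₜ[K] (c j • e j)) = 0 := by
  classical
  rw [← smul_tmul', tmul_smul, ← add_smul, ← e.tensorProduct_apply, map_smul, coord_apply,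
    repr_self_apply]
  split_ifs with hij
  · obtain ⟨rfl, rfl⟩ := Prod.mk.inj hij
    simp [hpq]
  · exact smul_zero _

end

theorem dim3_leibniz3_not_perfect_tensor_general {K L : Type*} [Field K]
    [AddCommGroup L] [Module K L]
    (b : MultilinearMap K (fun _ : Fin 3 => L) L)
    (e : Module.Basis (Fin 3) K L) (α β : K) (hα : α ≠ 0) (hβ : β ≠ 0)
    (h1 : b ![e 0, e 0, e 1] = α • e 0)
    (h2 : b ![e 1, e 0, e 1] = - (α • e 1))
    (h3 : b ![e 2, e 0, e 1] = β • e 2)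
    (hzero : ∀ i j k : Fin 3, ¬(j = 0 ∧ k = 1) → b ![e i, e j, e k] = 0) :
    Submodule.span K (Set.range fun a : Fin 3 → L => b a) = ⊤ ∧
    ∀ B : L ⊗[K] L →ₗ[K] L ⊗[K] L →ₗ[K] L ⊗[K] L,
      (∀ x y z w : L, B (x ⊗ₜ[K] y) (z ⊗ₜ[K] w) =
        b ![x, z, w] ⊗ₜ[K] y + x ⊗ₜ[K] b ![y, z, w]) →
      e 0 ⊗ₜ[K] e 1 ∉
        Submodule.span K
          {t : L ⊗[K] L | ∃ i j k l : Fin 3, t = B (e i ⊗ₜ[K] e j) (e k ⊗ₜ[K] e l)} ∧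
      Submodule.span K {t : L ⊗[K] L | ∃ u v, t = B u v} ≠ ⊤ := by
  have hdiag : ∀ i, b ![e i, e 0, e 1] = ![α, -α, β] i • e i := by
    intro i
    fin_cases i <;> simp [h1, h2, h3]
  refine ⟨span_range_eq_top_of_smul_basis_mem (fun a => b a) e ![α, -α, β] ?_
    (fun i => ⟨_, hdiag i⟩), fun B hB => ?_⟩
  · intro i
    fin_cases i <;> simpa
  have hker : Submodule.span K {t : L ⊗[K] L | ∃ u v, t = B u v} ≤
      LinearMap.ker ((e.tensorProduct e).coord (0, 1)) := by
    refine span_setOf_apply₂_le_ker_of_basis (e.tensorProduct e) B _ ?_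
    rintro ⟨i, j⟩ ⟨k, l⟩
    rw [e.tensorProduct_apply, e.tensorProduct_apply, hB]
    by_cases hkl : k = 0 ∧ l = 1
    · obtain ⟨rfl, rfl⟩ := hkl
      rw [hdiag, hdiag]
      exact e.coord_tensorProduct_smul_tmul_add_tmul_smul _ (by simp) i j
    · simp [hzero _ _ _ hkl]
  have hnot : e 0 ⊗ₜ[K] e 1 ∉ Submodule.span K {t : L ⊗[K] L | ∃ u v, t = B u v} := fun h => by
    have h01 := LinearMap.mem_ker.1 (hker h)
    rw [← e.tensorProduct_apply, Module.Basis.coord_apply, Module.Basis.repr_self] at h01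
    simp at h01
  refine ⟨fun h => hnot (Submodule.span_mono ?_ h), fun htop => hnot (htop ▸ Submodule.mem_top)⟩
  rintro _ ⟨i, j, k, l, rfl⟩
  exact ⟨_, _, rfl⟩

/-- over a field containing ℚ, the 3-dimensional perfect Leibniz 3-algebra
with `[e_1,e_1,e_2]=αe_1`, `[e_2,e_1,e_2]=-αe_2`, `[e_3,e_1,e_2]=βe_3` (zero otherwise,
`α,β ≠ 0`) is perfect, but `L⊗L` with the Daletskii–Takhtajan bracket is not perfect:
`e_1⊗e_2` is not in the span of the commutators `[e_i⊗e_j, e_k⊗e_l]`. -/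
theorem dim3_leibniz3_not_perfect_tensor {K L : Type*} [Field K] [CharZero K]
    [AddCommGroup L] [Module K L]
    (b : MultilinearMap K (fun _ : Fin 3 => L) L) (hFI : FundId ⇑b)
    (e : Module.Basis (Fin 3) K L) (α β : K) (hα : α ≠ 0) (hβ : β ≠ 0)
    (h1 : b ![e 0, e 0, e 1] = α • e 0)
    (h2 : b ![e 1, e 0, e 1] = - (α • e 1))
    (h3 : b ![e 2, e 0, e 1] = β • e 2)
    (hzero : ∀ i j k : Fin 3, ¬(j = 0 ∧ k = 1) → b ![e i, e j, e k] = 0) :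
    Submodule.span K (Set.range fun a : Fin 3 → L => b a) = ⊤ ∧
    ∀ B : L ⊗[K] L →ₗ[K] L ⊗[K] L →ₗ[K] L ⊗[K] L,
      (∀ x y z w : L, B (x ⊗ₜ[K] y) (z ⊗ₜ[K] w) =
        b ![x, z, w] ⊗ₜ[K] y + x ⊗ₜ[K] b ![y, z, w]) →
      e 0 ⊗ₜ[K] e 1 ∉
        Submodule.span K
          {t : L ⊗[K] L | ∃ i j k l : Fin 3, t = B (e i ⊗ₜ[K] e j) (e k ⊗ₜ[K] e l)} ∧
      Submodule.span K {t : L ⊗[K] L | ∃ u v, t = B u v} ≠ ⊤ :=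
  dim3_leibniz3_not_perfect_tensor_general b e α β hα hβ h1 h2 h3 hzero
end

section
/- If μ : L → P is a crossed module of Leibniz n-algebras, then U_n^p(μ) : U_n^p(L) → U_n^p(P), with the induced action, is a crossed module of Leibniz p-algebras, where p = k(n-1)+1. -/
open Function TensorProduct

section AuxGeneric

set_option linter.unusedSectionVars false

variable {M N : Type*} {n : ℕ}

private lemma hd_lt {k j : ℕ} (h : j < n - 1) : j < (k + 1) * (n - 1) + 1 := by
  have h2 : n - 1 ≤ (k + 1) * (n - 1) := Nat.le_mul_of_pos_left _ (Nat.succ_pos k)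
  omega

private lemma pr_eq (k : ℕ) : (k + 1) * (n - 1) + 1 = (n - 1) + (k * (n - 1) + 1) := by ring

private lemma tl_lt {k : ℕ} (i : Fin (k * (n - 1) + 1)) :
    (n - 1) + (i : ℕ) < (k + 1) * (n - 1) + 1 := by
  have h1 := pr_eq (n := n) k
  have := i.isLt
  omega

/-- The head composite function. -/
def cpF {k : ℕ} (a : Fin ((k + 1) * (n - 1) + 1) → M) (m : M) : Fin n → M :=
  fun j => if h : (j : ℕ) < n - 1 then a ⟨j, hd_lt h⟩ else m

/-- The tail function. -/
def tlF {k : ℕ} (a : Fin ((k + 1) * (n - 1) + 1) → M) : Fin (k * (n - 1) + 1) → M :=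
  fun i => a ⟨(n - 1) + i, tl_lt i⟩

lemma nest_succ {k : ℕ} (b : (Fin n → M) → M) (a : Fin ((k + 1) * (n - 1) + 1) → M) :
    nestBr b (k + 1) a = b (cpF a (nestBr b k (tlF a))) := rfl

lemma nest_zero' (b : (Fin n → M) → M) (a : Fin (0 * (n - 1) + 1) → M)
    (j : Fin (0 * (n - 1) + 1)) : nestBr b 0 a = a j := by
  have hj : j = ⟨0, Nat.succ_pos _⟩ := by
    apply Fin.ext
    have := j.isLt
    omega
  rw [hj]; rfl

lemma fin1_eq {j j' : Fin (0 * (n - 1) + 1)} : j = j' := by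
  apply Fin.ext
  have := j.isLt; have := j'.isLt
  omega

variable {k : ℕ}

lemma cpF_apply_lt (a : Fin ((k + 1) * (n - 1) + 1) → M) (m : M) (jn : Fin n)
    (h : (jn : ℕ) < n - 1) : cpF a m jn = a ⟨jn, hd_lt h⟩ := dif_pos h

lemma cpF_apply_ge (a : Fin ((k + 1) * (n - 1) + 1) → M) (m : M) (jn : Fin n)
    (h : ¬ (jn : ℕ) < n - 1) : cpF a m jn = m := dif_neg h

lemma tlF_apply (a : Fin ((k + 1) * (n - 1) + 1) → M) (i : Fin (k * (n - 1) + 1)) :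
    tlF a i = a ⟨(n - 1) + i, tl_lt i⟩ := rfl

lemma cpF_update_lt (a : Fin ((k + 1) * (n - 1) + 1) → M) (m x : M)
    (j : Fin ((k + 1) * (n - 1) + 1)) (h : (j : ℕ) < n - 1) :
    cpF (Function.update a j x) m = Function.update (cpF a m) ⟨j, by omega⟩ x := by
  funext jn
  by_cases hj : (jn : ℕ) < n - 1
  · rw [cpF_apply_lt _ _ _ hj]
    by_cases he : (jn : ℕ) = (j : ℕ)
    · have h1 : (⟨(jn : ℕ), hd_lt hj⟩ : Fin ((k + 1) * (n - 1) + 1)) = j := Fin.ext he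
      have h2 : jn = (⟨(j : ℕ), by omega⟩ : Fin n) := Fin.ext he
      rw [h1, Function.update_self, h2, Function.update_self]
    · have h1 : (⟨(jn : ℕ), hd_lt hj⟩ : Fin ((k + 1) * (n - 1) + 1)) ≠ j :=
        fun hc => he (congrArg Fin.val hc)
      have h2 : jn ≠ (⟨(j : ℕ), by omega⟩ : Fin n) :=
        fun hc => he (congrArg Fin.val hc)
      rw [Function.update_of_ne h1, Function.update_of_ne h2, cpF_apply_lt _ _ _ hj]
  · have h2 : jn ≠ (⟨(j : ℕ), by omega⟩ : Fin n) := by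
      intro hc
      exact hj (by rw [hc]; exact h)
    rw [cpF_apply_ge _ _ _ hj, Function.update_of_ne h2, cpF_apply_ge _ _ _ hj]

lemma cpF_update_ge (a : Fin ((k + 1) * (n - 1) + 1) → M) (m x : M)
    (j : Fin ((k + 1) * (n - 1) + 1)) (h : ¬ (j : ℕ) < n - 1) :
    cpF (Function.update a j x) m = cpF a m := by
  funext jn
  by_cases hj : (jn : ℕ) < n - 1
  · rw [cpF_apply_lt _ _ _ hj, cpF_apply_lt _ _ _ hj]
    have h1 : (⟨(jn : ℕ), hd_lt hj⟩ : Fin ((k + 1) * (n - 1) + 1)) ≠ j := by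
      intro hc
      exact h (by rw [← congrArg Fin.val hc]; exact hj)
    rw [Function.update_of_ne h1]
  · rw [cpF_apply_ge _ _ _ hj, cpF_apply_ge _ _ _ hj]

lemma tlF_update_lt (a : Fin ((k + 1) * (n - 1) + 1) → M) (x : M)
    (j : Fin ((k + 1) * (n - 1) + 1)) (h : (j : ℕ) < n - 1) :
    tlF (Function.update a j x) = tlF a := by
  funext i
  have h1 : (⟨(n - 1) + (i : ℕ), tl_lt i⟩ : Fin ((k + 1) * (n - 1) + 1)) ≠ j := by
    intro hc
    have := congrArg Fin.val hc
    simp only at this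
    omega
  rw [tlF_apply, tlF_apply, Function.update_of_ne h1]

lemma tl_sub_lt (j : Fin ((k + 1) * (n - 1) + 1)) (h : ¬ (j : ℕ) < n - 1) :
    (j : ℕ) - (n - 1) < k * (n - 1) + 1 := by
  have h1 := pr_eq (n := n) k
  have := j.isLt
  omega

lemma tlF_update_ge (a : Fin ((k + 1) * (n - 1) + 1) → M) (x : M)
    (j : Fin ((k + 1) * (n - 1) + 1)) (h : ¬ (j : ℕ) < n - 1) :
    tlF (Function.update a j x) = Function.update (tlF a) ⟨(j : ℕ) - (n - 1), tl_sub_lt j h⟩ x := by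
  funext i
  by_cases he : (i : ℕ) = (j : ℕ) - (n - 1)
  · have h1 : (⟨(n - 1) + (i : ℕ), tl_lt i⟩ : Fin ((k + 1) * (n - 1) + 1)) = j :=
      Fin.ext (by simp only; omega)
    have h2 : i = (⟨(j : ℕ) - (n - 1), tl_sub_lt j h⟩ : Fin (k * (n - 1) + 1)) := Fin.ext he
    rw [tlF_apply, h1, Function.update_self, h2, Function.update_self]
  · have h1 : (⟨(n - 1) + (i : ℕ), tl_lt i⟩ : Fin ((k + 1) * (n - 1) + 1)) ≠ j := by
      intro hc
      have := congrArg Fin.val hc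
      simp only at this
      omega
    have h2 : i ≠ (⟨(j : ℕ) - (n - 1), tl_sub_lt j h⟩ : Fin (k * (n - 1) + 1)) :=
      fun hc => he (congrArg Fin.val hc)
    rw [tlF_apply, Function.update_of_ne h1, Function.update_of_ne h2, tlF_apply]

lemma cpF_update_last (hn : 2 ≤ n) (a : Fin ((k + 1) * (n - 1) + 1) → M) (m m' : M) :
    Function.update (cpF a m) ⟨n - 1, by omega⟩ m' = cpF a m' := by
  funext jn
  by_cases hj : (jn : ℕ) < n - 1
  · have h2 : jn ≠ (⟨n - 1, by omega⟩ : Fin n) := by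
      intro hc
      have h3 : (jn : ℕ) = n - 1 := congrArg Fin.val hc
      omega
    rw [Function.update_of_ne h2, cpF_apply_lt _ _ _ hj, cpF_apply_lt _ _ _ hj]
  · have h2 : jn = (⟨n - 1, by omega⟩ : Fin n) := by
      apply Fin.ext
      show (jn : ℕ) = n - 1
      have := jn.isLt
      omega
    rw [h2, Function.update_self, cpF_apply_ge _ _ _ (lt_irrefl (n-1))]

lemma cpF_comp (g : M → N) (a : Fin ((k + 1) * (n - 1) + 1) → M) (m : M) :
    (fun jn => g (cpF a m jn)) = cpF (fun i => g (a i)) (g m) := by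
  funext jn
  by_cases hj : (jn : ℕ) < n - 1
  · rw [cpF_apply_lt _ _ _ hj, cpF_apply_lt _ _ _ hj]
  · rw [cpF_apply_ge _ _ _ hj, cpF_apply_ge _ _ _ hj]

lemma tlF_comp (g : M → N) (a : Fin ((k + 1) * (n - 1) + 1) → M) :
    tlF (fun i => g (a i)) = fun i => g (tlF a i) := rfl

end AuxGeneric

section AuxLin

set_option linter.unusedSectionVars false
set_option maxHeartbeats 1000000

variable {K M : Type*} [Field K] [AddCommGroup M] [Module K M] {n : ℕ}
variable (b : MultilinearMap K (fun _ : Fin n => M) M)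

lemma nest_succ_update_head {k : ℕ} (bf : (Fin n → M) → M)
    (a : Fin ((k + 1) * (n - 1) + 1) → M) (j : Fin ((k + 1) * (n - 1) + 1))
    (h : (j : ℕ) < n - 1) (z : M) :
    nestBr bf (k + 1) (Function.update a j z) =
      bf (Function.update (cpF a (nestBr bf k (tlF a))) ⟨(j : ℕ), by omega⟩ z) := by
  rw [nest_succ, cpF_update_lt a _ z j h, tlF_update_lt a z j h]

lemma nest_succ_update_tail {k : ℕ} (bf : (Fin n → M) → M)
    (a : Fin ((k + 1) * (n - 1) + 1) → M) (j : Fin ((k + 1) * (n - 1) + 1))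
    (h : ¬ (j : ℕ) < n - 1) (z : M) :
    nestBr bf (k + 1) (Function.update a j z) =
      bf (cpF a (nestBr bf k
        (Function.update (tlF a) ⟨(j : ℕ) - (n - 1), tl_sub_lt j h⟩ z))) := by
  rw [nest_succ, cpF_update_ge a _ z j h, tlF_update_ge a z j h]

lemma map_cpF_add (hn : 2 ≤ n) {k : ℕ} (a : Fin ((k + 1) * (n - 1) + 1) → M) (x y : M) :
    b (cpF a (x + y)) = b (cpF a x) + b (cpF a y) := by
  rw [← cpF_update_last hn a x (x + y), b.map_update_add, cpF_update_last hn a x x,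
    cpF_update_last hn a x y]

lemma map_cpF_smul (hn : 2 ≤ n) {k : ℕ} (a : Fin ((k + 1) * (n - 1) + 1) → M) (c : K) (x : M) :
    b (cpF a (c • x)) = c • b (cpF a x) := by
  rw [← cpF_update_last hn a x (c • x), b.map_update_smul, cpF_update_last hn a x x]

lemma map_cpF_sum (hn : 2 ≤ n) {k : ℕ} (a : Fin ((k + 1) * (n - 1) + 1) → M)
    {α : Type*} (s : Finset α) (g : α → M) :
    b (cpF a (∑ u ∈ s, g u)) = ∑ u ∈ s, b (cpF a (g u)) := by
  rw [← cpF_update_last hn a 0 (∑ u ∈ s, g u), b.map_update_sum]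
  exact Finset.sum_congr rfl fun u _ => by rw [cpF_update_last hn a 0 (g u)]

lemma nest_update_add (hn : 2 ≤ n) :
    ∀ (k : ℕ) (a : Fin (k * (n - 1) + 1) → M) (j : Fin (k * (n - 1) + 1)) (x y : M),
      nestBr ⇑b k (Function.update a j (x + y)) =
        nestBr ⇑b k (Function.update a j x) + nestBr ⇑b k (Function.update a j y)
  | 0, a, j, x, y => by
    rw [nest_zero' ⇑b _ j, nest_zero' ⇑b _ j, nest_zero' ⇑b _ j,
      Function.update_self, Function.update_self, Function.update_self]
  | k + 1, a, j, x, y => by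
    by_cases hj : (j : ℕ) < n - 1
    · rw [nest_succ_update_head ⇑b a j hj, nest_succ_update_head ⇑b a j hj,
        nest_succ_update_head ⇑b a j hj]
      exact b.map_update_add _ _ _ _
    · rw [nest_succ_update_tail ⇑b a j hj, nest_succ_update_tail ⇑b a j hj,
        nest_succ_update_tail ⇑b a j hj, nest_update_add hn k _ _ x y]
      exact map_cpF_add b hn a _ _

lemma nest_update_smul (hn : 2 ≤ n) :
    ∀ (k : ℕ) (a : Fin (k * (n - 1) + 1) → M) (j : Fin (k * (n - 1) + 1)) (c : K) (x : M),
      nestBr ⇑b k (Function.update a j (c • x)) = c • nestBr ⇑b k (Function.update a j x)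
  | 0, a, j, c, x => by
    rw [nest_zero' ⇑b _ j, nest_zero' ⇑b _ j, Function.update_self, Function.update_self]
  | k + 1, a, j, c, x => by
    by_cases hj : (j : ℕ) < n - 1
    · rw [nest_succ_update_head ⇑b a j hj, nest_succ_update_head ⇑b a j hj]
      exact b.map_update_smul _ _ _ _
    · rw [nest_succ_update_tail ⇑b a j hj, nest_succ_update_tail ⇑b a j hj,
        nest_update_smul hn k _ _ c x]
      exact map_cpF_smul b hn a _ _

/-- The nested bracket as a multilinear map. -/
def nestML (hn : 2 ≤ n) (k : ℕ) : MultilinearMap K (fun _ : Fin (k * (n - 1) + 1) => M) M where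
  toFun := nestBr ⇑b k
  map_update_add' := by
    intro dec a j x y
    have h := Subsingleton.elim dec (instDecidableEqFin _)
    subst h
    exact nest_update_add b hn k a j x y
  map_update_smul' := by
    intro dec a j c x
    have h := Subsingleton.elim dec (instDecidableEqFin _)
    subst h
    exact nest_update_smul b hn k a j c x

lemma nest_coord_zero (hn : 2 ≤ n) (k : ℕ) (a : Fin (k * (n - 1) + 1) → M)
    (j : Fin (k * (n - 1) + 1)) (h : a j = 0) : nestBr ⇑b k a = 0 :=
  (nestML b hn k).map_coord_zero j h

lemma nest_deriv (hn : 2 ≤ n) (f : M → M) (hf : IsNDeriv ⇑b f) :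
    ∀ k, IsNDeriv (nestBr ⇑b k) f
  | 0 => by
    intro a
    rw [Fintype.sum_eq_single (⟨0, Nat.succ_pos _⟩ : Fin (0 * (n - 1) + 1))
      (fun i hi => absurd fin1_eq hi)]
    rw [show nestBr ⇑b 0 a = a ⟨0, Nat.succ_pos _⟩ from rfl,
      nest_zero' ⇑b _ ⟨0, Nat.succ_pos _⟩, Function.update_self]
  | k + 1 => by
    intro a
    have hnn : n = (n - 1) + 1 := by omega
    rw [nest_succ, hf (cpF a (nestBr ⇑b k (tlF a)))]
    rw [← Equiv.sum_comp (finCongr (pr_eq (n := n) k).symm)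
      (fun i : Fin ((k + 1) * (n - 1) + 1) =>
        nestBr ⇑b (k + 1) (Function.update a i (f (a i)))), Fin.sum_univ_add]
    rw [← Equiv.sum_comp (finCongr hnn.symm)
      (fun i : Fin n => b (Function.update (cpF a (nestBr ⇑b k (tlF a))) i
        (f (cpF a (nestBr ⇑b k (tlF a)) i)))), Fin.sum_univ_add, Fin.sum_univ_one]
    congr 1
    · refine Finset.sum_congr rfl fun jj _ => ?_
      have hv1 : (finCongr hnn.symm) (Fin.castAdd 1 jj) = (⟨(jj : ℕ), by omega⟩ : Fin n) := by
        apply Fin.ext; simp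
      have hv2 : (finCongr (pr_eq (n := n) k).symm) (Fin.castAdd (k * (n - 1) + 1) jj) =
          (⟨(jj : ℕ), hd_lt jj.isLt⟩ : Fin ((k + 1) * (n - 1) + 1)) := by
        apply Fin.ext; simp
      simp only [hv1, hv2]
      rw [nest_succ_update_head ⇑b a _ jj.isLt, cpF_apply_lt a _ _ jj.isLt]
    · have hv3 : (finCongr hnn.symm) (Fin.natAdd (n - 1) (0 : Fin 1)) =
          (⟨n - 1, by omega⟩ : Fin n) := by
        apply Fin.ext; simp
      rw [hv3, cpF_apply_ge a _ _ (Nat.lt_irrefl (n - 1)),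
        nest_deriv hn f hf k (tlF a), b.map_update_sum]
      refine Finset.sum_congr rfl fun i _ => ?_
      rw [cpF_update_last hn a (nestBr ⇑b k (tlF a)) _]
      have hv4 : (finCongr (pr_eq (n := n) k).symm) (Fin.natAdd (n - 1) i) =
          (⟨(n - 1) + (i : ℕ), tl_lt i⟩ : Fin ((k + 1) * (n - 1) + 1)) := by
        apply Fin.ext; simp
      simp only [hv4]
      rw [nest_succ_update_tail ⇑b a _ ((by omega : ¬ (n - 1) + (i : ℕ) < n - 1))]
      have hidx : ∀ h1 : (n - 1) + (i : ℕ) - (n - 1) < k * (n - 1) + 1,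
          (⟨(n - 1) + (i : ℕ) - (n - 1), h1⟩ : Fin (k * (n - 1) + 1)) = i :=
        fun h1 => Fin.ext (by show (n - 1) + (i : ℕ) - (n - 1) = (i : ℕ); omega)
      rw [hidx]
      rfl

lemma nest_fundId (hn : 2 ≤ n) [NeZero n] (hb : FundId ⇑b) (k : ℕ) (hk : 1 ≤ k) :
    FundId (nestBr ⇑b k) := by
  obtain ⟨k0, rfl⟩ : ∃ k0, k = k0 + 1 := ⟨k - 1, by omega⟩
  intro x y
  have h0 : ((0 : Fin ((k0 + 1) * (n - 1) + 1)) : ℕ) < n - 1 := by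
    have : ((0 : Fin ((k0 + 1) * (n - 1) + 1)) : ℕ) = 0 := rfl
    omega
  have hC : ∀ m, nestBr ⇑b (k0 + 1) (Function.update y 0 m) =
      b (Function.update (cpF y (nestBr ⇑b k0 (tlF y))) (0 : Fin n) m) := by
    intro m
    have hz : ∀ h1 : ((0 : Fin ((k0 + 1) * (n - 1) + 1)) : ℕ) < n,
        (⟨((0 : Fin ((k0 + 1) * (n - 1) + 1)) : ℕ), h1⟩ : Fin n) = 0 :=
      fun h1 => Fin.ext (by simp)
    rw [nest_succ_update_head ⇑b y 0 h0, hz]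
  have hD : IsNDeriv ⇑b (fun m => b (Function.update (cpF y (nestBr ⇑b k0 (tlF y))) 0 m)) :=
    fun a => hb a (cpF y (nestBr ⇑b k0 (tlF y)))
  have hE := nest_deriv b hn _ hD (k0 + 1)
  simp only [hC]
  exact hE x

end AuxLin

section AuxCM

set_option linter.unusedSectionVars false
set_option maxHeartbeats 1000000

variable {K L P : Type*} [Field K] [AddCommGroup L] [Module K L]
  [AddCommGroup P] [Module K P] {n : ℕ}
variable (bP : MultilinearMap K (fun _ : Fin n => P) P)
variable (B : MultilinearMap K (fun _ : Fin n => L × P) (L × P))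
variable (μ : L →ₗ[K] P)

lemma nest_snd (hBP : ∀ a : Fin n → L × P, (B a).2 = bP fun i => (a i).2) :
    ∀ (k : ℕ) (a : Fin (k * (n - 1) + 1) → L × P),
      (nestBr ⇑B k a).2 = nestBr ⇑bP k (fun i => (a i).2)
  | 0, a => rfl
  | k + 1, a => by
    rw [nest_succ, nest_succ, hBP]
    have e1 : (fun i => (cpF a (nestBr ⇑B k (tlF a)) i).2) =
        cpF (fun i => (a i).2) (nestBr ⇑bP k (tlF (fun i => (a i).2))) := by
      funext jn
      by_cases hj : (jn : ℕ) < n - 1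
      · rw [cpF_apply_lt _ _ _ hj, cpF_apply_lt _ _ _ hj]
      · rw [cpF_apply_ge _ _ _ hj, cpF_apply_ge _ _ _ hj]
        exact nest_snd hBP k (tlF a)
    rw [e1]

lemma nest_hom (bL : MultilinearMap K (fun _ : Fin n => L) L)
    (hhom : ∀ l : Fin n → L, μ (bL l) = bP fun i => μ (l i)) :
    ∀ (k : ℕ) (l : Fin (k * (n - 1) + 1) → L),
      μ (nestBr ⇑bL k l) = nestBr ⇑bP k fun i => μ (l i)
  | 0, l => rfl
  | k + 1, l => by
    rw [nest_succ, hhom, nest_succ]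
    have e1 : (fun i => μ (cpF l (nestBr ⇑bL k (tlF l)) i)) =
        cpF (fun i => μ (l i)) (nestBr ⇑bP k (tlF (fun i => μ (l i)))) := by
      funext jn
      by_cases hj : (jn : ℕ) < n - 1
      · rw [cpF_apply_lt _ _ _ hj, cpF_apply_lt _ _ _ hj]
      · rw [cpF_apply_ge _ _ _ hj, cpF_apply_ge _ _ _ hj]
        exact nest_hom bL hhom k (tlF l)
    rw [e1]

lemma nest_CM1 (hn : 2 ≤ n)
    (hBP : ∀ a : Fin n → L × P, (B a).2 = bP fun i => (a i).2)
    (hCM1 : ∀ a : Fin n → L × P,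
      μ (B a).1 = bP (fun i => μ (a i).1 + (a i).2) - bP (fun i => (a i).2)) :
    ∀ (k : ℕ) (a : Fin (k * (n - 1) + 1) → L × P),
      μ (nestBr ⇑B k a).1 =
        nestBr ⇑bP k (fun i => μ (a i).1 + (a i).2) - nestBr ⇑bP k (fun i => (a i).2)
  | 0, a => (add_sub_cancel_right _ _).symm
  | k + 1, a => by
    rw [nest_succ, hCM1, nest_succ, nest_succ]
    have e1 : (fun i => μ (cpF a (nestBr ⇑B k (tlF a)) i).1 +
          (cpF a (nestBr ⇑B k (tlF a)) i).2) =
        cpF (fun i => μ (a i).1 + (a i).2)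
          (nestBr ⇑bP k (tlF (fun i => μ (a i).1 + (a i).2))) := by
      funext jn
      by_cases hj : (jn : ℕ) < n - 1
      · rw [cpF_apply_lt _ _ _ hj, cpF_apply_lt _ _ _ hj]
      · rw [cpF_apply_ge _ _ _ hj, cpF_apply_ge _ _ _ hj,
          nest_CM1 hn hBP hCM1 k (tlF a), nest_snd bP B hBP k (tlF a),
          sub_add_cancel]
        rfl
    have e2 : (fun i => (cpF a (nestBr ⇑B k (tlF a)) i).2) =
        cpF (fun i => (a i).2) (nestBr ⇑bP k (tlF (fun i => (a i).2))) := by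
      funext jn
      by_cases hj : (jn : ℕ) < n - 1
      · rw [cpF_apply_lt _ _ _ hj, cpF_apply_lt _ _ _ hj]
      · rw [cpF_apply_ge _ _ _ hj, cpF_apply_ge _ _ _ hj]
        exact nest_snd bP B hBP k (tlF a)
    rw [e1, e2]

lemma nest_CM23 (hn : 2 ≤ n)
    (hBP : ∀ a : Fin n → L × P, (B a).2 = bP fun i => (a i).2)
    (hCM1 : ∀ a : Fin n → L × P,
      μ (B a).1 = bP (fun i => μ (a i).1 + (a i).2) - bP (fun i => (a i).2))
    (hCM23 : ∀ (a : Fin n → L × P) (j j' : Fin n), j ≠ j' →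
      (B (Function.update (Function.update a j' ((a j').1, (0 : P))) j
          ((0 : L), μ (a j).1 + (a j).2))).1 =
        (B (Function.update a j' ((a j').1, (0 : P)))).1) :
    ∀ (k : ℕ) (a : Fin (k * (n - 1) + 1) → L × P) (j j' : Fin (k * (n - 1) + 1)), j ≠ j' →
      (nestBr ⇑B k (Function.update (Function.update a j' ((a j').1, (0 : P))) j
          ((0 : L), μ (a j).1 + (a j).2))).1 =
        (nestBr ⇑B k (Function.update a j' ((a j').1, (0 : P)))).1
  | 0, a, j, j', hne => absurd fin1_eq hne
  | k + 1, a, j, j', hne => by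
    have hvne : (j : ℕ) ≠ (j' : ℕ) := fun h => hne (Fin.ext h)
    by_cases hj : (j : ℕ) < n - 1 <;> by_cases hj' : (j' : ℕ) < n - 1
    -- Case A : both in the head
    · rw [nest_succ, nest_succ, tlF_update_lt _ _ _ hj, tlF_update_lt _ _ _ hj',
        cpF_update_lt _ _ _ _ hj, cpF_update_lt _ _ _ _ hj']
      have h := hCM23 (cpF a (nestBr ⇑B k (tlF a))) ⟨(j : ℕ), by omega⟩ ⟨(j' : ℕ), by omega⟩
        (fun hc => absurd (congrArg Fin.val hc) hvne)
      have hg1 : cpF a (nestBr ⇑B k (tlF a)) ⟨(j' : ℕ), by omega⟩ = a j' :=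
        (cpF_apply_lt a (nestBr ⇑B k (tlF a)) ⟨(j' : ℕ), by omega⟩ hj').trans
          (congrArg a (Fin.ext rfl))
      have hg2 : cpF a (nestBr ⇑B k (tlF a)) ⟨(j : ℕ), by omega⟩ = a j :=
        (cpF_apply_lt a (nestBr ⇑B k (tlF a)) ⟨(j : ℕ), by omega⟩ hj).trans
          (congrArg a (Fin.ext rfl))
      rw [hg1, hg2] at h
      exact h
    -- Case B : j in the head, j' in the tail
    · rw [nest_succ, nest_succ, tlF_update_lt _ _ _ hj, tlF_update_ge _ _ _ hj',
        cpF_update_lt _ _ _ _ hj, cpF_update_ge _ _ _ _ hj']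
      set X := nestBr ⇑B k (Function.update (tlF a) ⟨(j' : ℕ) - (n - 1), tl_sub_lt j' hj'⟩
        ((a j').1, (0 : P))) with hXdef
      have hX2 : X.2 = 0 := by
        rw [hXdef, nest_snd bP B hBP k]
        refine nest_coord_zero bP hn k _ ⟨(j' : ℕ) - (n - 1), tl_sub_lt j' hj'⟩ ?_
        show (Function.update (tlF a) _ ((a j').1, (0 : P)) _).2 = 0
        rw [Function.update_self]
      have h := hCM23 (cpF a X) ⟨(j : ℕ), by omega⟩ ⟨n - 1, by omega⟩
        (fun hc => absurd (congrArg Fin.val hc) (show ¬ ((j : ℕ) = n - 1) by omega))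
      have hup : Function.update (cpF a X) ⟨n - 1, by omega⟩
          ((cpF a X ⟨n - 1, by omega⟩).1, (0 : P)) = cpF a X := by
        rw [Function.update_eq_self_iff, cpF_apply_ge _ _ _ (Nat.lt_irrefl (n - 1))]
        exact Prod.ext rfl hX2.symm
      rw [hup] at h
      have hg2 : cpF a X ⟨(j : ℕ), by omega⟩ = a j :=
        (cpF_apply_lt a X ⟨(j : ℕ), by omega⟩ hj).trans (congrArg a (Fin.ext rfl))
      rw [hg2] at h
      exact h
    -- Case C : j in the tail, j' in the head
    · rw [nest_succ, nest_succ, tlF_update_ge _ _ _ hj, tlF_update_lt _ _ _ hj',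
        cpF_update_ge _ _ _ _ hj, cpF_update_lt _ _ _ _ hj', cpF_update_lt _ _ _ _ hj']
      set X2 := nestBr ⇑B k (Function.update (tlF a) ⟨(j : ℕ) - (n - 1), tl_sub_lt j hj⟩
        ((0 : L), μ (a j).1 + (a j).2)) with hX2def
      set X1 := nestBr ⇑B k (tlF a) with hX1def
      have hne2 : (⟨n - 1, by omega⟩ : Fin n) ≠ ⟨(j' : ℕ), by omega⟩ :=
        fun hc => absurd (congrArg Fin.val hc) (show ¬ (n - 1 = (j' : ℕ)) by omega)
      have key : μ X2.1 + X2.2 = μ X1.1 + X1.2 := by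
        rw [hX2def, hX1def, nest_CM1 bP B μ hn hBP hCM1 k _, nest_CM1 bP B μ hn hBP hCM1 k _,
          nest_snd bP B hBP k, nest_snd bP B hBP k, sub_add_cancel, sub_add_cancel]
        congr 1
        funext i
        by_cases hi : i = ⟨(j : ℕ) - (n - 1), tl_sub_lt j hj⟩
        · rw [hi, Function.update_self, map_zero, zero_add]
          have hti : tlF a ⟨(j : ℕ) - (n - 1), tl_sub_lt j hj⟩ = a j := by
            rw [tlF_apply]
            refine congrArg a (Fin.ext ?_)
            show (n - 1) + ((j : ℕ) - (n - 1)) = (j : ℕ)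
            omega
          rw [hti]
        · rw [Function.update_of_ne hi]
      have htrans : ∀ X : L × P,
          (B (Function.update (cpF a X) ⟨(j' : ℕ), by omega⟩ ((a j').1, (0 : P)))).1 =
          (B (Function.update (Function.update (cpF a X) ⟨(j' : ℕ), by omega⟩
              ((a j').1, (0 : P))) ⟨n - 1, by omega⟩ (0, μ X.1 + X.2))).1 := by
        intro X
        have h := hCM23 (Function.update (cpF a X) ⟨(j' : ℕ), by omega⟩ ((a j').1, (0 : P)))
          ⟨n - 1, by omega⟩ ⟨(j' : ℕ), by omega⟩ hne2
        simp only [Function.update_self, Function.update_idem] at h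
        rw [Function.update_of_ne hne2, cpF_apply_ge _ _ _ (Nat.lt_irrefl (n - 1))] at h
        exact h.symm
      have hcollapse : ∀ (X : L × P) (z : L × P),
          Function.update (Function.update (cpF a X) ⟨(j' : ℕ), by omega⟩
            ((a j').1, (0 : P))) ⟨n - 1, by omega⟩ z =
          Function.update (Function.update (cpF a X1) ⟨(j' : ℕ), by omega⟩
            ((a j').1, (0 : P))) ⟨n - 1, by omega⟩ z := by
        intro X z
        rw [← cpF_update_last hn a X1 X, Function.update_comm hne2, Function.update_idem]
      rw [htrans X2]
      rw [hcollapse X2]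
      rw [htrans X1]
      exact congrArg (fun v => (B (Function.update (Function.update (cpF a X1)
        ⟨(j' : ℕ), by omega⟩ ((a j').1, (0 : P))) ⟨n - 1, by omega⟩ ((0 : L), v))).1) key
    -- Case D : both in the tail
    · rw [nest_succ, nest_succ, tlF_update_ge _ _ _ hj, tlF_update_ge _ _ _ hj',
        cpF_update_ge _ _ _ _ hj, cpF_update_ge _ _ _ _ hj', cpF_update_ge _ _ _ _ hj']
      have hrel : (⟨(j : ℕ) - (n - 1), tl_sub_lt j hj⟩ : Fin (k * (n - 1) + 1)) ≠
          ⟨(j' : ℕ) - (n - 1), tl_sub_lt j' hj'⟩ := by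
        intro hc
        have h5 : (j : ℕ) - (n - 1) = (j' : ℕ) - (n - 1) := congrArg Fin.val hc
        omega
      have hev : tlF a ⟨(j : ℕ) - (n - 1), tl_sub_lt j hj⟩ = a j := by
        rw [tlF_apply]
        refine congrArg a (Fin.ext ?_)
        show (n - 1) + ((j : ℕ) - (n - 1)) = (j : ℕ)
        omega
      have hev' : tlF a ⟨(j' : ℕ) - (n - 1), tl_sub_lt j' hj'⟩ = a j' := by
        rw [tlF_apply]
        refine congrArg a (Fin.ext ?_)
        show (n - 1) + ((j' : ℕ) - (n - 1)) = (j' : ℕ)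
        omega
      have IH := nest_CM23 hn hBP hCM1 hCM23 k (tlF a)
        ⟨(j : ℕ) - (n - 1), tl_sub_lt j hj⟩ ⟨(j' : ℕ) - (n - 1), tl_sub_lt j' hj'⟩ hrel
      rw [hev, hev'] at IH
      have h2 : (nestBr ⇑B k (Function.update (Function.update (tlF a)
          ⟨(j' : ℕ) - (n - 1), tl_sub_lt j' hj'⟩ ((a j').1, (0 : P)))
          ⟨(j : ℕ) - (n - 1), tl_sub_lt j hj⟩ ((0 : L), μ (a j).1 + (a j).2))).2 = 0 := by
        rw [nest_snd bP B hBP k]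
        refine nest_coord_zero bP hn k _ ⟨(j' : ℕ) - (n - 1), tl_sub_lt j' hj'⟩ ?_
        show (Function.update (Function.update (tlF a) _ _ ) _ _ _).2 = 0
        rw [Function.update_of_ne (Ne.symm hrel), Function.update_self]
      have h1 : (nestBr ⇑B k (Function.update (tlF a)
          ⟨(j' : ℕ) - (n - 1), tl_sub_lt j' hj'⟩ ((a j').1, (0 : P)))).2 = 0 := by
        rw [nest_snd bP B hBP k]
        refine nest_coord_zero bP hn k _ ⟨(j' : ℕ) - (n - 1), tl_sub_lt j' hj'⟩ ?_
        show (Function.update (tlF a) _ _ _).2 = 0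
        rw [Function.update_self]
      have hX : (nestBr ⇑B k (Function.update (Function.update (tlF a)
          ⟨(j' : ℕ) - (n - 1), tl_sub_lt j' hj'⟩ ((a j').1, (0 : P)))
          ⟨(j : ℕ) - (n - 1), tl_sub_lt j hj⟩ ((0 : L), μ (a j).1 + (a j).2))) =
          (nestBr ⇑B k (Function.update (tlF a)
          ⟨(j' : ℕ) - (n - 1), tl_sub_lt j' hj'⟩ ((a j').1, (0 : P)))) :=
        Prod.ext IH (h2.trans h1.symm)
      rw [hX]

end AuxCM

/-- if `μ : L → P` is a crossed module of Leibniz `n`-algebras (action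
encoded by the semidirect-product bracket `B` on `L × P`; (CM1) is the displayed
compatibility of `μ` with `B`, and (CM2)/(CM3) the displayed Peiffer-type condition),
then `μ`, with the nested `p`-ary brackets (`p = k*(n-1)+1`), is a crossed module of
Leibniz `p`-algebras. -/
theorem nested_crossed_module {K L P : Type*} [Field K] [AddCommGroup L] [Module K L]
    [AddCommGroup P] [Module K P]
    (n k : ℕ) [NeZero n] (hn : 2 ≤ n) (hk : 1 ≤ k)
    (bL : MultilinearMap K (fun _ : Fin n => L) L) (hbL : FundId ⇑bL)
    (bP : MultilinearMap K (fun _ : Fin n => P) P) (hbP : FundId ⇑bP)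
    (B : MultilinearMap K (fun _ : Fin n => L × P) (L × P)) (hB : FundId ⇑B)
    (hBP : ∀ a : Fin n → L × P, (B a).2 = bP fun i => (a i).2)
    (hBL : ∀ l : Fin n → L, B (fun i => (l i, (0 : P))) = (bL l, 0))
    (μ : L →ₗ[K] P)
    (hhom : ∀ l : Fin n → L, μ (bL l) = bP fun i => μ (l i))
    (hCM1 : ∀ a : Fin n → L × P,
      μ (B a).1 = bP (fun i => μ (a i).1 + (a i).2) - bP (fun i => (a i).2))
    (hCM23 : ∀ (a : Fin n → L × P) (j j' : Fin n), j ≠ j' →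
      (B (Function.update (Function.update a j' ((a j').1, (0 : P))) j
          ((0 : L), μ (a j).1 + (a j).2))).1 =
        (B (Function.update a j' ((a j').1, (0 : P)))).1) :
    FundId (nestBr (⇑B) k) ∧
    (∃ Bp : MultilinearMap K (fun _ : Fin (k * (n - 1) + 1) => L × P) (L × P),
        ⇑Bp = nestBr (⇑B) k) ∧
    (∀ l : Fin (k * (n - 1) + 1) → L,
        μ (nestBr (⇑bL) k l) = nestBr (⇑bP) k fun i => μ (l i)) ∧
    (∀ a : Fin (k * (n - 1) + 1) → L × P,
        μ (nestBr (⇑B) k a).1 =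
          nestBr (⇑bP) k (fun i => μ (a i).1 + (a i).2) -
            nestBr (⇑bP) k (fun i => (a i).2)) ∧
    (∀ (a : Fin (k * (n - 1) + 1) → L × P) (j j' : Fin (k * (n - 1) + 1)), j ≠ j' →
        (nestBr (⇑B) k (Function.update (Function.update a j' ((a j').1, (0 : P))) j
            ((0 : L), μ (a j).1 + (a j).2))).1 =
          (nestBr (⇑B) k (Function.update a j' ((a j').1, (0 : P)))).1) := by
  refine ⟨nest_fundId B hn hB k hk, ⟨nestML B hn k, rfl⟩, nest_hom bP μ bL hhom k,
    nest_CM1 bP B μ hn hBP hCM1 k, nest_CM23 bP B μ hn hBP hCM1 hCM23 k⟩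
end

section
/- Let M be a trivial co-representation of a Leibniz algebra L. Then M⊗L becomes a co-representation of the Leibniz algebra L^{⊗(n-1)} = D_n(U_n(L)) via [m⊗l, l_1⊗⋯⊗l_{n-1}] = m⊗[l,l_1,…,l_{n-1}] and [l_1⊗⋯⊗l_{n-1}, m⊗l] = −m⊗[l,l_1,…,l_{n-1}], where the n-ary bracket is the nested Leibniz bracket. -/
open Function TensorProduct

section MyAux

variable {K L : Type*} [Field K] [AddCommGroup L] [Module K L]

/-- The nested bracket as a multilinear map. -/
noncomputable def nuAux (br : L →ₗ[K] L →ₗ[K] L) :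
    (k : ℕ) → MultilinearMap K (fun _ : Fin (k + 1) => L) L
  | 0 =>
    letI : Subsingleton (Fin (0 + 1)) := Fin.subsingleton_one
    MultilinearMap.ofSubsingleton K L L 0 LinearMap.id
  | k + 1 =>
    (multilinearCurryLeftEquiv K (fun _ : Fin (k + 2) => L) L).symm
      { toFun := fun l => (br l).compMultilinearMap (nuAux br k)
        map_add' := by intro a b; ext v; simp
        map_smul' := by intro c a; ext v; simp }

lemma nuAux_succ (br : L →ₗ[K] L →ₗ[K] L) (k : ℕ) (v : Fin (k + 2) → L) :
    nuAux br (k + 1) v = br (v 0) (nuAux br k (Fin.tail v)) := by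
  rfl

lemma nuAux_eq_nested2 (br : L →ₗ[K] L →ₗ[K] L) :
    ∀ (k : ℕ) (v : Fin (k + 1) → L),
      nuAux br k v = nested2 (fun x y => br x y) k v := by
  intro k
  induction k with
  | zero =>
    intro v
    letI : Subsingleton (Fin (0 + 1)) := Fin.subsingleton_one
    show (MultilinearMap.ofSubsingleton K L L 0 LinearMap.id) v = v 0
    simp
  | succ k ih =>
    intro v
    rw [nuAux_succ]
    show _ = br (v 0) (nested2 _ k fun i => v i.succ)
    rw [ih]
    rfl

/-- Right multiplications are derivations of the nested bracket. -/
lemma nuAux_deriv (br : L →ₗ[K] L →ₗ[K] L)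
    (hLeib : ∀ x y z : L, br x (br y z) = br (br x y) z - br (br x z) y) :
    ∀ (k : ℕ) (z : L) (l : Fin (k + 1) → L),
      ∑ i, nuAux br k (Function.update l i (br (l i) z)) = br (nuAux br k l) z := by
  intro k
  induction k with
  | zero =>
    intro z l
    letI : Subsingleton (Fin (0 + 1)) := Fin.subsingleton_one
    show ∑ i : Fin 1, (MultilinearMap.ofSubsingleton K L L 0 LinearMap.id) _ =
      br ((MultilinearMap.ofSubsingleton K L L 0 LinearMap.id) l) z
    simp
  | succ k ih =>
    intro z l
    rw [Fin.sum_univ_succ]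
    have h0 : nuAux br (k + 1) (Function.update l 0 (br (l 0) z)) =
        br (br (l 0) z) (nuAux br k (Fin.tail l)) := by
      rw [nuAux_succ, Function.update_self, Fin.tail_update_zero]
    have hs : ∀ j : Fin (k + 1),
        nuAux br (k + 1) (Function.update l j.succ (br (l j.succ) z)) =
          br (l 0) (nuAux br k (Function.update (Fin.tail l) j (br (Fin.tail l j) z))) := by
      intro j
      rw [nuAux_succ, Function.update_of_ne (Fin.succ_ne_zero j).symm, Fin.tail_update_succ]
      rfl
    rw [h0]
    simp only [hs]
    rw [← map_sum (br (l 0)), ih z (Fin.tail l), nuAux_succ]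
    have := hLeib (l 0) (nuAux br k (Fin.tail l)) z
    abel_nf
    rw [this]
    abel

end MyAux

section DerAux

variable {K L : Type*} [Field K] [AddCommGroup L] [Module K L] {m : ℕ}

noncomputable def derAux (f : L →ₗ[K] L) :
    PiTensorProduct K (fun _ : Fin m => L) →ₗ[K] PiTensorProduct K (fun _ : Fin m => L) :=
  PiTensorProduct.lift
    (∑ i, (PiTensorProduct.tprod K).compLinearMap (Function.update (fun _ => LinearMap.id) i f))

lemma derAux_tprod (f : L →ₗ[K] L) (l : Fin m → L) :
    derAux f (PiTensorProduct.tprod K l) =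
      ∑ i, PiTensorProduct.tprod K (Function.update l i (f (l i))) := by
  rw [derAux, PiTensorProduct.lift.tprod]
  simp only [MultilinearMap.sum_apply, MultilinearMap.compLinearMap_apply]
  refine Finset.sum_congr rfl fun i _ => ?_
  congr 1
  funext j
  rcases eq_or_ne j i with rfl | h
  · simp
  · simp [Function.update_of_ne h]

lemma derAux_add (f g : L →ₗ[K] L) :
    derAux (K := K) (m := m) (f + g) = derAux f + derAux g := by
  ext l
  simp only [LinearMap.compMultilinearMap_apply, LinearMap.add_apply, derAux_tprod]
  rw [← Finset.sum_add_distrib]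
  refine Finset.sum_congr rfl fun i _ => ?_
  exact (PiTensorProduct.tprod K).map_update_add l i _ _

lemma derAux_sub (f g : L →ₗ[K] L) :
    derAux (K := K) (m := m) (f - g) = derAux f - derAux g := by
  ext l
  simp only [LinearMap.compMultilinearMap_apply, LinearMap.sub_apply, derAux_tprod]
  rw [← Finset.sum_sub_distrib]
  refine Finset.sum_congr rfl fun i _ => ?_
  exact (PiTensorProduct.tprod K).map_update_sub l i _ _

lemma derAux_smul (c : K) (f : L →ₗ[K] L) :
    derAux (K := K) (m := m) (c • f) = c • derAux f := by
  ext l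
  simp only [LinearMap.compMultilinearMap_apply, LinearMap.smul_apply, derAux_tprod,
    Finset.smul_sum]
  refine Finset.sum_congr rfl fun i _ => ?_
  exact (PiTensorProduct.tprod K).map_update_smul l i _ _

lemma off_swap (F : Fin m → Fin m → PiTensorProduct K (fun _ : Fin m => L)) :
    ∑ j, ∑ i ∈ Finset.univ.erase j, F i j = ∑ j, ∑ i ∈ Finset.univ.erase j, F j i := by
  rw [Finset.sum_comm' (t' := Finset.univ) (s' := fun i => Finset.univ.erase i)
    (fun x y => by simp [Finset.mem_erase, ne_comm])]

lemma derAux_DD (f g : L →ₗ[K] L) (l : Fin m → L) :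
    derAux f (derAux g (PiTensorProduct.tprod K l)) =
      (∑ j, PiTensorProduct.tprod K (Function.update l j (f (g (l j))))) +
      ∑ j, ∑ i ∈ Finset.univ.erase j,
        PiTensorProduct.tprod K
          (Function.update (Function.update l i (f (l i))) j (g (l j))) := by
  rw [derAux_tprod, map_sum, ← Finset.sum_add_distrib]
  refine Finset.sum_congr rfl fun j _ => ?_
  rw [derAux_tprod, ← Finset.add_sum_erase _ _ (Finset.mem_univ j)]
  congr 1
  · rw [Function.update_self, Function.update_idem]
  · refine Finset.sum_congr rfl fun i hi => ?_
    have hij : i ≠ j := (Finset.mem_erase.1 hi).1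
    rw [Function.update_of_ne hij, Function.update_comm hij]

lemma derAux_comm (f g : L →ₗ[K] L) (x : PiTensorProduct K (fun _ : Fin m => L)) :
    derAux f (derAux g x) - derAux g (derAux f x) =
      derAux (f ∘ₗ g) x - derAux (g ∘ₗ f) x := by
  have h : (derAux f ∘ₗ derAux g - derAux g ∘ₗ derAux f : _) =
      derAux (K := K) (m := m) (f ∘ₗ g) - derAux (g ∘ₗ f) := by
    ext l
    simp only [LinearMap.compMultilinearMap_apply, LinearMap.sub_apply, LinearMap.comp_apply]
    rw [derAux_DD f g, derAux_DD g f, derAux_tprod, derAux_tprod]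
    have hoff : (∑ j, ∑ i ∈ Finset.univ.erase j,
        PiTensorProduct.tprod K
          (Function.update (Function.update l i (f (l i))) j (g (l j)))) =
        ∑ j, ∑ i ∈ Finset.univ.erase j,
        PiTensorProduct.tprod K
          (Function.update (Function.update l i (g (l i))) j (f (l j))) := by
      rw [off_swap (fun i j => PiTensorProduct.tprod K
        (Function.update (Function.update l i (f (l i))) j (g (l j))))]
      refine Finset.sum_congr rfl fun j _ => Finset.sum_congr rfl fun i hi => ?_
      have hij : j ≠ i := (Finset.mem_erase.1 hi).1.symm
      rw [Function.update_comm hij]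
    rw [hoff]
    simp only [LinearMap.comp_apply]
    abel
  have := congrArg (fun T => T x) h
  simpa using this

end DerAux


/-- if `M` is a trivial co-representation of a Leibniz algebra `L`, then
`M⊗L` is a co-representation of the Leibniz algebra `D_n(U_n(L)) = L^{⊗(n-1)}`
(`n = m+1`, DT bracket) via `[m⊗l, l_1⊗⋯⊗l_{n-1}] = m⊗[l,l_1,…,l_{n-1}]` and
`[l_1⊗⋯⊗l_{n-1}, m⊗l] = -m⊗[l,l_1,…,l_{n-1}]`, the `n`-ary bracket being the nested one. -/
theorem corep_on_tensor {K L M : Type*} [Field K] [AddCommGroup L] [Module K L]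
    [AddCommGroup M] [Module K M]
    (br : L →ₗ[K] L →ₗ[K] L)
    (hLeib : ∀ x y z : L, br x (br y z) = br (br x y) z - br (br x z) y)
    (ρM : M →ₗ[K] L →ₗ[K] M) (ρM' : L →ₗ[K] M →ₗ[K] M)
    (htriv : ρM = 0 ∧ ρM' = 0)
    (m : ℕ) (hm : 1 ≤ m) :
    ∃ (Bg : PiTensorProduct K (fun _ : Fin m => L) →ₗ[K]
            PiTensorProduct K (fun _ : Fin m => L) →ₗ[K]
            PiTensorProduct K (fun _ : Fin m => L))
      (ρ₁ : (M ⊗[K] L) →ₗ[K] PiTensorProduct K (fun _ : Fin m => L) →ₗ[K] (M ⊗[K] L))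
      (ρ₂ : PiTensorProduct K (fun _ : Fin m => L) →ₗ[K] (M ⊗[K] L) →ₗ[K] (M ⊗[K] L)),
      -- Bg is the Daletskii–Takhtajan Leibniz bracket of D_n(U_n(L))
      (∀ l l' : Fin m → L,
        Bg (PiTensorProduct.tprod K l) (PiTensorProduct.tprod K l') =
          ∑ i : Fin m,
            PiTensorProduct.tprod K (Function.update l i
              (nested2 (fun x y => br x y) m (Fin.cons (l i) l')))) ∧
      (∀ x y z, Bg x (Bg y z) = Bg (Bg x y) z - Bg (Bg x z) y) ∧
      -- the two actions on pure tensors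
      (∀ (mm : M) (l : L) (v : Fin m → L),
        ρ₁ (mm ⊗ₜ[K] l) (PiTensorProduct.tprod K v) =
          mm ⊗ₜ[K] nested2 (fun x y => br x y) m (Fin.cons l v)) ∧
      (∀ (mm : M) (l : L) (v : Fin m → L),
        ρ₂ (PiTensorProduct.tprod K v) (mm ⊗ₜ[K] l) =
          - (mm ⊗ₜ[K] nested2 (fun x y => br x y) m (Fin.cons l v))) ∧
      -- the co-representation axioms
      (∀ (x y : PiTensorProduct K (fun _ : Fin m => L)) (nn : M ⊗[K] L),
        ρ₁ nn (Bg x y) = ρ₁ (ρ₁ nn x) y - ρ₁ (ρ₁ nn y) x ∧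
        ρ₂ x (ρ₁ nn y) = ρ₁ (ρ₂ x nn) y - ρ₂ (Bg x y) nn ∧
        ρ₂ x (ρ₂ y nn) = ρ₂ (Bg x y) nn - ρ₁ (ρ₂ x nn) y) := by
  classical
  obtain ⟨k, rfl⟩ : ∃ k, m = k + 1 := ⟨m - 1, by omega⟩
  set φ : PiTensorProduct K (fun _ : Fin (k + 1) => L) →ₗ[K] L :=
    PiTensorProduct.lift (nuAux br k) with hφdef
  have hφt : ∀ l : Fin (k + 1) → L, φ (PiTensorProduct.tprod K l) = nuAux br k l :=
    fun l => PiTensorProduct.lift.tprod l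
  -- φ intertwines derAux of right multiplications with right multiplication
  have hder : ∀ (z : L) (x : PiTensorProduct K (fun _ : Fin (k + 1) => L)),
      φ (derAux (br.flip z) x) = br (φ x) z := by
    intro z x
    have h : φ ∘ₗ derAux (br.flip z) = br.flip z ∘ₗ φ := by
      ext l
      simp only [LinearMap.compMultilinearMap_apply, LinearMap.comp_apply, derAux_tprod,
        map_sum, hφt, LinearMap.flip_apply]
      exact nuAux_deriv br hLeib k z l
    exact DFunLike.congr_fun h x
  have hnest : ∀ (x : L) (v : Fin (k + 1) → L),
      nested2 (fun a b => br a b) (k + 1) (Fin.cons x v) = br x (nuAux br k v) := by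
    intro x v
    simp only [nested2, Fin.cons_zero, Fin.cons_succ]
    rw [nuAux_eq_nested2]
  have hR : ∀ a b : L, br.flip (br a b) = br.flip b ∘ₗ br.flip a - br.flip a ∘ₗ br.flip b := by
    intro a b
    ext w
    simp only [LinearMap.flip_apply, LinearMap.sub_apply, LinearMap.comp_apply]
    exact hLeib w a b
  let DerL : (L →ₗ[K] L) →ₗ[K]
      (PiTensorProduct K (fun _ : Fin (k + 1) => L) →ₗ[K]
        PiTensorProduct K (fun _ : Fin (k + 1) => L)) :=
    { toFun := fun f => derAux f
      map_add' := derAux_add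
      map_smul' := derAux_smul }
  let E : L →ₗ[K] (M ⊗[K] L) →ₗ[K] (M ⊗[K] L) := LinearMap.lTensorHom M ∘ₗ br.flip
  let Bg := ((DerL ∘ₗ br.flip) ∘ₗ φ).flip
  let ρ₁ := (E ∘ₗ φ).flip
  let ρ₂ := -(E ∘ₗ φ)
  have hBgapp : ∀ x y, Bg x y = derAux (br.flip (φ y)) x := fun _ _ => rfl
  have hρ₁app : ∀ nn t, ρ₁ nn t = LinearMap.lTensor M (br.flip (φ t)) nn := fun _ _ => rfl
  have hρ₂app : ∀ t nn, ρ₂ t nn = -(LinearMap.lTensor M (br.flip (φ t)) nn) := fun _ _ => rfl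
  have hEbr : ∀ (a b : L) (w : M ⊗[K] L),
      LinearMap.lTensor M (br.flip (br a b)) w =
        LinearMap.lTensor M (br.flip b) (LinearMap.lTensor M (br.flip a) w) -
        LinearMap.lTensor M (br.flip a) (LinearMap.lTensor M (br.flip b) w) := by
    intro a b w
    rw [hR a b]
    have : LinearMap.lTensor M (br.flip b ∘ₗ br.flip a - br.flip a ∘ₗ br.flip b) =
        LinearMap.lTensor M (br.flip b ∘ₗ br.flip a) -
          LinearMap.lTensor M (br.flip a ∘ₗ br.flip b) :=
      map_sub (LinearMap.lTensorHom M) _ _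
    rw [this]
    simp only [LinearMap.sub_apply, LinearMap.lTensor_comp, LinearMap.comp_apply]
  refine ⟨Bg, ρ₁, ρ₂, ?_, ?_, ?_, ?_, ?_⟩
  · -- Bg on pure tensors
    intro l l'
    rw [hBgapp, hφt, derAux_tprod]
    refine Finset.sum_congr rfl fun i _ => ?_
    rw [hnest (l i) l']
    rfl
  · -- Leibniz identity for Bg
    intro x y z
    rw [hBgapp, hBgapp, hBgapp, hBgapp, hBgapp, hder, hR (φ y) (φ z), derAux_sub]
    simp only [LinearMap.sub_apply]
    exact (derAux_comm (br.flip (φ z)) (br.flip (φ y)) x).symm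
  · -- ρ₁ on pure tensors
    intro mm l v
    rw [hρ₁app, hφt, LinearMap.lTensor_tmul, hnest l v]
    rfl
  · -- ρ₂ on pure tensors
    intro mm l v
    rw [hρ₂app, hφt, LinearMap.lTensor_tmul, hnest l v]
    rfl
  · -- the co-representation axioms
    intro x y nn
    have hφBg : φ (Bg x y) = br (φ x) (φ y) := by rw [hBgapp]; exact hder (φ y) x
    refine ⟨?_, ?_, ?_⟩
    · rw [hρ₁app, hρ₁app, hρ₁app, hρ₁app, hρ₁app, hφBg, hEbr]
    · rw [hρ₂app, hρ₁app, hρ₁app, hρ₂app, hρ₂app, hφBg, hEbr]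
      simp only [map_neg]
      abel
    · rw [hρ₂app, hρ₂app, hρ₂app, hρ₂app, hρ₁app, hφBg, hEbr]
      simp only [map_neg]
      abel
end

section
/- Let M be a trivial co-representation of a Leibniz algebra L. For each k ≥ 0, the linear map h_k : M⊗L⊗L^{⊗k(n-1)} → M⊗L⊗L^{⊗k} defined by h_k(m⊗l⊗l_1^1⊗⋯⊗l_{n-1}^1⊗⋯⊗l_1^k⊗⋯⊗l_{n-1}^k) = m⊗l⊗[l_1^1,[l_2^1,…,[l_{n-2}^1,l_{n-1}^1]…]]⊗⋯⊗[l_1^k,…] defines a morphism of chain complexes from the n-ary Leibniz chain complex of U_n(L) with coefficients in M to the Leibniz chain complex of L with coefficients M⊗L; h_0 is an isomorphism, and if L is perfect each h_k is surjective. -/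
open Function TensorProduct

section Aux

open Function TensorProduct

lemma succ_comp_update' {α : Type*} {m : ℕ} (v : Fin (m + 2) → α) (i : Fin (m + 1)) (c : α) :
    (fun j : Fin (m + 1) => Function.update v i.succ c j.succ) =
      Function.update (fun j : Fin (m + 1) => v j.succ) i c := by
  funext j
  rcases eq_or_ne j i with rfl | hne
  · simp
  · rw [Function.update_of_ne (fun hh => hne (Fin.succ_injective _ hh)),
      Function.update_of_ne hne]

lemma zero_comp_update' {α : Type*} {m : ℕ} (v : Fin (m + 2) → α) (c : α) :
    (fun j : Fin (m + 1) => Function.update v 0 c j.succ) = fun j => v j.succ := by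
  funext j
  rw [Function.update_of_ne (Fin.succ_ne_zero j)]

lemma map_update_family' {α β γ : Type*} [DecidableEq α] (F : β → γ) (g : α → β) (i : α) (v : β) :
    (fun j => F (Function.update g i v j)) = Function.update (fun j => F (g j)) i (F v) := by
  funext j
  rcases eq_or_ne j i with rfl | hne
  · simp
  · rw [Function.update_of_ne hne, Function.update_of_ne hne]

lemma nested2_cons' {L : Type*} (b : L → L → L) (m : ℕ) (l : L) (v : Fin (m + 1) → L) :
    nested2 b (m + 1) (Fin.cons l v) = b l (nested2 b m v) := by
  simp only [nested2, Fin.cons_zero, Fin.cons_succ]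

lemma nested2_deriv' {K L : Type*} [Field K] [AddCommGroup L] [Module K L]
    (br : L →ₗ[K] L →ₗ[K] L) (D : L →ₗ[K] L)
    (hD : ∀ a c : L, D (br a c) = br (D a) c + br a (D c)) :
    ∀ (m : ℕ) (v : Fin (m + 1) → L),
      D (nested2 (fun a c => br a c) m v) =
        ∑ i, nested2 (fun a c => br a c) m (Function.update v i (D (v i))) := by
  intro m
  induction m with
  | zero =>
    intro v
    simp [nested2, Fin.sum_univ_succ]
  | succ m ih =>
    intro v
    have e0 : nested2 (fun a c => br a c) (m + 1) (Function.update v 0 (D (v 0))) =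
        br (D (v 0)) (nested2 (fun a c => br a c) m fun i => v i.succ) := by
      show br (Function.update v 0 (D (v 0)) 0)
          (nested2 (fun a c => br a c) m fun i => Function.update v 0 (D (v 0)) i.succ) = _
      rw [zero_comp_update', Function.update_self]
    have e1 : ∀ i : Fin (m + 1),
        nested2 (fun a c => br a c) (m + 1) (Function.update v i.succ (D (v i.succ))) =
          br (v 0) (nested2 (fun a c => br a c) m
            (Function.update (fun j => v j.succ) i (D (v i.succ)))) := by
      intro i
      show br (Function.update v i.succ (D (v i.succ)) 0)
          (nested2 (fun a c => br a c) m fun j => Function.update v i.succ (D (v i.succ)) j.succ) = _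
      rw [Function.update_of_ne (Fin.succ_ne_zero i).symm, succ_comp_update']
    rw [Fin.sum_univ_succ, e0]
    simp only [e1]
    rw [show nested2 (fun a c => br a c) (m + 1) v =
      br (v 0) (nested2 (fun a c => br a c) m fun i => v i.succ) from rfl]
    rw [hD, ih, map_sum]

lemma nested2_rightmul' {K L : Type*} [Field K] [AddCommGroup L] [Module K L]
    (br : L →ₗ[K] L →ₗ[K] L)
    (hder : ∀ w a c : L, br (br a c) w = br (br a w) c + br a (br c w))
    (w : L) (m : ℕ) (v : Fin (m + 1) → L) :
    ∑ i, nested2 (fun a c => br a c) m (Function.update v i (br (v i) w)) =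
      br (nested2 (fun a c => br a c) m v) w := by
  have hD : ∀ a c : L, (br.flip w) (br a c) = br ((br.flip w) a) c + br a ((br.flip w) c) := by
    intro a c
    simp only [LinearMap.flip_apply]
    exact hder w a c
  have h2 := nested2_deriv' br (br.flip w) hD m v
  simp only [LinearMap.flip_apply] at h2
  exact h2.symm

lemma removeNth_update_lt' {α : Type*} {k : ℕ} (t s : Fin (k + 1)) (h : (s : ℕ) < (t : ℕ))
    (c : α) (X : Fin (k + 1) → α) :
    Fin.removeNth t (Function.update X s c) =
      Function.update (Fin.removeNth t X) ⟨(s : ℕ), by omega⟩ c := by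
  have hsa : t.succAbove ⟨(s : ℕ), by omega⟩ = s := by
    rw [Fin.succAbove_of_castSucc_lt]
    · rfl
    · rw [Fin.lt_def]; simpa using h
  funext i
  rcases eq_or_ne i ⟨(s : ℕ), by omega⟩ with rfl | hne
  · show Function.update X s c (t.succAbove _) = _
    rw [congrArg (Function.update X s c) hsa, Function.update_self, Function.update_self]
  · rw [Function.update_of_ne hne]
    show Function.update X s c (t.succAbove i) = Fin.removeNth t X i
    rw [Function.update_of_ne, Fin.removeNth]
    rw [← hsa]
    exact fun hh => hne (Fin.succAbove_right_inj.mp hh)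

/-- A multilinear map lands in a submodule as soon as it does on a spanning set in each slot. -/
lemma multilinear_mem_of_span' {K A W : Type*} [Field K] [AddCommGroup A] [Module K A]
    [AddCommGroup W] [Module K W] {k : ℕ}
    (f : MultilinearMap K (fun _ : Fin k => A) W) (S : Set A)
    (hS : Submodule.span K S = ⊤) (N : Submodule K W)
    (hgen : ∀ v : Fin k → A, (∀ i, v i ∈ S) → f v ∈ N) :
    ∀ v : Fin k → A, f v ∈ N := by
  suffices H : ∀ j : ℕ, ∀ v : Fin k → A, (∀ i : Fin k, (j : ℕ) ≤ (i : ℕ) → v i ∈ S) → f v ∈ N by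
    intro v
    exact H k v (fun i hi => absurd i.isLt (not_lt.mpr hi))
  intro j
  induction j with
  | zero => exact fun v hv => hgen v (fun i => hv i (Nat.zero_le _))
  | succ j ih =>
    intro v hv
    by_cases hjk : j < k
    · set jf : Fin k := ⟨j, hjk⟩ with hjf
      have key : ∀ c ∈ Submodule.span K S, f (Function.update v jf c) ∈ N := by
        intro c hc
        induction hc using Submodule.span_induction with
        | mem c hcS =>
          apply ih
          intro i hi
          rcases eq_or_ne i jf with rfl | hne
          · rwa [Function.update_self]
          · rw [Function.update_of_ne hne]
            refine hv i ?_
            have : (i : ℕ) ≠ j := fun hij => hne (Fin.ext hij)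
            omega
        | zero =>
          rw [f.map_coord_zero jf (Function.update_self jf 0 v)]
          exact N.zero_mem
        | add a b _ _ ha hb =>
          rw [f.map_update_add]
          exact N.add_mem ha hb
        | smul r a _ ha =>
          rw [f.map_update_smul]
          exact N.smul_mem r ha
      have := key (v jf) (hS ▸ Submodule.mem_top)
      rwa [Function.update_eq_self] at this
    · apply ih
      intro i hi
      exact absurd (lt_of_lt_of_le i.isLt (le_of_not_gt hjk)) (not_lt.mpr hi)

/-- If `L` is perfect then nested brackets of any fixed length span `L`. -/
lemma nested_span_top' {K L : Type*} [Field K] [AddCommGroup L] [Module K L]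
    (br : L →ₗ[K] L →ₗ[K] L)
    (hperf : Submodule.span K (Set.range fun ab : L × L => br ab.1 ab.2) = ⊤) :
    ∀ m : ℕ,
      Submodule.span K (Set.range fun v : Fin (m + 1) → L => nested2 (fun x y => br x y) m v) = ⊤ := by
  intro m
  induction m with
  | zero =>
    rw [eq_top_iff]
    intro z _
    exact Submodule.subset_span ⟨fun _ => z, rfl⟩
  | succ m ih =>
    have key : ∀ a b : L, br a b ∈ Submodule.span K
        (Set.range fun v : Fin (m + 2) → L => nested2 (fun x y => br x y) (m + 1) v) := by
      intro a b
      have hb : b ∈ Submodule.span K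
          (Set.range fun v : Fin (m + 1) → L => nested2 (fun x y => br x y) m v) := by
        rw [ih]; exact Submodule.mem_top
      induction hb using Submodule.span_induction with
      | mem c hc =>
        obtain ⟨v, rfl⟩ := hc
        exact Submodule.subset_span ⟨Fin.cons a v, nested2_cons' _ m a v⟩
      | zero => rw [map_zero]; exact Submodule.zero_mem _
      | add u w _ _ hu hw => rw [map_add]; exact Submodule.add_mem _ hu hw
      | smul r u _ hu => rw [map_smul]; exact Submodule.smul_mem _ r hu
    rw [eq_top_iff, ← hperf]
    apply Submodule.span_le.mpr
    rintro _ ⟨⟨a, b⟩, rfl⟩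
    exact key a b

/-- Generators of `V ⊗ (⊗_{Fin k} A)`. -/
lemma span_tmul_tprod_eq_top' (K V A : Type*) [Field K] [AddCommGroup V] [Module K V]
    [AddCommGroup A] [Module K A] (k : ℕ) :
    Submodule.span K {z : V ⊗[K] PiTensorProduct K (fun _ : Fin k => A) |
      ∃ (nn : V) (X : Fin k → A), z = nn ⊗ₜ[K] PiTensorProduct.tprod K X} = ⊤ := by
  rw [eq_top_iff, ← TensorProduct.span_tmul_eq_top K V (PiTensorProduct K (fun _ : Fin k => A))]
  apply Submodule.span_le.mpr
  rintro _ ⟨a, b, rfl⟩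
  have hb : b ∈ Submodule.span K (Set.range (PiTensorProduct.tprod K
      (s := fun _ : Fin k => A))) := by
    rw [PiTensorProduct.span_tprod_eq_top]; exact Submodule.mem_top
  induction hb using Submodule.span_induction with
  | mem c hc =>
    obtain ⟨X, rfl⟩ := hc
    exact Submodule.subset_span ⟨a, X, rfl⟩
  | zero => rw [tmul_zero]; exact Submodule.zero_mem _
  | add u w _ _ hu hw => rw [tmul_add]; exact Submodule.add_mem _ hu hw
  | smul r u _ hu => rw [tmul_smul]; exact Submodule.smul_mem _ r hu

end Aux

/-- for a trivial co-representation `M` of a Leibniz algebra `L`, the maps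
`h_k(m⊗l⊗l^1⊗⋯⊗l^k) = m⊗l⊗[l^1_1,[l^1_2,…]]⊗⋯` define a morphism of chain complexes from
the `n`-ary Leibniz complex of `U_n(L)` with coefficients in `M` (i.e. the Leibniz complex
of `D_n(U_n(L)) = L^{⊗(n-1)}`, `n = m'+2`, with coefficients `M⊗L`) to the Leibniz complex
of `L` with coefficients `M⊗L`; `h_0` is an isomorphism, and if `L` is perfect each `h_k`
is surjective. -/
theorem chain_morphism_h {K L M : Type*} [Field K] [AddCommGroup L] [Module K L]
    [AddCommGroup M] [Module K M]
    (br : L →ₗ[K] L →ₗ[K] L)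
    (hLeib : ∀ x y z : L, br x (br y z) = br (br x y) z - br (br x z) y)
    (m' : ℕ)
    -- the Daletskii–Takhtajan Leibniz bracket on g = L^{⊗(n-1)}, n-1 = m'+1
    (Bg : PiTensorProduct K (fun _ : Fin (m' + 1) => L) →ₗ[K]
          PiTensorProduct K (fun _ : Fin (m' + 1) => L) →ₗ[K]
          PiTensorProduct K (fun _ : Fin (m' + 1) => L))
    (hBg : ∀ l l' : Fin (m' + 1) → L,
      Bg (PiTensorProduct.tprod K l) (PiTensorProduct.tprod K l') =
        ∑ i : Fin (m' + 1),
          PiTensorProduct.tprod K (Function.update l i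
            (nested2 (fun x y => br x y) (m' + 1) (Fin.cons (l i) l'))))
    -- the co-representation structure of M⊗L over g
    (ρ₁ : (M ⊗[K] L) →ₗ[K]
        PiTensorProduct K (fun _ : Fin (m' + 1) => L) →ₗ[K] (M ⊗[K] L))
    (ρ₂ : PiTensorProduct K (fun _ : Fin (m' + 1) => L) →ₗ[K]
        (M ⊗[K] L) →ₗ[K] (M ⊗[K] L))
    (hρ₁ : ∀ (mm : M) (l : L) (v : Fin (m' + 1) → L),
      ρ₁ (mm ⊗ₜ[K] l) (PiTensorProduct.tprod K v) =
        mm ⊗ₜ[K] nested2 (fun x y => br x y) (m' + 1) (Fin.cons l v))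
    (hρ₂ : ∀ (mm : M) (l : L) (v : Fin (m' + 1) → L),
      ρ₂ (PiTensorProduct.tprod K v) (mm ⊗ₜ[K] l) =
        - (mm ⊗ₜ[K] nested2 (fun x y => br x y) (m' + 1) (Fin.cons l v)))
    -- the co-representation structure of M⊗L over L
    (σ₁ : (M ⊗[K] L) →ₗ[K] L →ₗ[K] (M ⊗[K] L))
    (σ₂ : L →ₗ[K] (M ⊗[K] L) →ₗ[K] (M ⊗[K] L))
    (hσ₁ : ∀ (mm : M) (l l' : L), σ₁ (mm ⊗ₜ[K] l) l' = mm ⊗ₜ[K] br l l')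
    (hσ₂ : ∀ (mm : M) (l l' : L), σ₂ l' (mm ⊗ₜ[K] l) = - (mm ⊗ₜ[K] br l l'))
    -- the boundary maps of the Leibniz complex CL_*(g, M⊗L)
    (dn : ∀ k : ℕ,
      (M ⊗[K] L) ⊗[K]
          PiTensorProduct K
            (fun _ : Fin (k + 1) => PiTensorProduct K (fun _ : Fin (m' + 1) => L)) →ₗ[K]
        (M ⊗[K] L) ⊗[K]
          PiTensorProduct K
            (fun _ : Fin k => PiTensorProduct K (fun _ : Fin (m' + 1) => L)))
    (hdn : ∀ (k : ℕ) (nn : M ⊗[K] L)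
        (x : Fin (k + 1) → PiTensorProduct K (fun _ : Fin (m' + 1) => L)),
      dn k (nn ⊗ₜ[K] PiTensorProduct.tprod K x) =
        ρ₁ nn (x 0) ⊗ₜ[K] PiTensorProduct.tprod K (Fin.tail x) +
        (∑ t : Fin (k + 1),
          if (t : ℕ) = 0 then 0
          else ((-1 : ℤ) ^ ((t : ℕ) + 1)) •
            (ρ₂ (x t) nn ⊗ₜ[K] PiTensorProduct.tprod K (Fin.removeNth t x))) +
        ∑ t : Fin (k + 1), ∑ s : Fin (k + 1),
          if (s : ℕ) < (t : ℕ) then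
            ((-1 : ℤ) ^ (t : ℕ)) •
              (nn ⊗ₜ[K] PiTensorProduct.tprod K
                (Fin.removeNth t (Function.update x s (Bg (x s) (x t)))))
          else 0)
    -- the boundary maps of the Leibniz complex CL_*(L, M⊗L)
    (d2 : ∀ k : ℕ,
      (M ⊗[K] L) ⊗[K] PiTensorProduct K (fun _ : Fin (k + 1) => L) →ₗ[K]
        (M ⊗[K] L) ⊗[K] PiTensorProduct K (fun _ : Fin k => L))
    (hd2 : ∀ (k : ℕ) (nn : M ⊗[K] L) (x : Fin (k + 1) → L),
      d2 k (nn ⊗ₜ[K] PiTensorProduct.tprod K x) =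
        σ₁ nn (x 0) ⊗ₜ[K] PiTensorProduct.tprod K (Fin.tail x) +
        (∑ t : Fin (k + 1),
          if (t : ℕ) = 0 then 0
          else ((-1 : ℤ) ^ ((t : ℕ) + 1)) •
            (σ₂ (x t) nn ⊗ₜ[K] PiTensorProduct.tprod K (Fin.removeNth t x))) +
        ∑ t : Fin (k + 1), ∑ s : Fin (k + 1),
          if (s : ℕ) < (t : ℕ) then
            ((-1 : ℤ) ^ (t : ℕ)) •
              (nn ⊗ₜ[K] PiTensorProduct.tprod K
                (Fin.removeNth t (Function.update x s (br (x s) (x t)))))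
          else 0)
    -- the comparison maps h_k
    (h : ∀ k : ℕ,
      (M ⊗[K] L) ⊗[K]
          PiTensorProduct K
            (fun _ : Fin k => PiTensorProduct K (fun _ : Fin (m' + 1) => L)) →ₗ[K]
        (M ⊗[K] L) ⊗[K] PiTensorProduct K (fun _ : Fin k => L))
    (hh : ∀ (k : ℕ) (nn : M ⊗[K] L) (x : Fin k → Fin (m' + 1) → L),
      h k (nn ⊗ₜ[K] PiTensorProduct.tprod K (fun i => PiTensorProduct.tprod K (x i))) =
        nn ⊗ₜ[K] PiTensorProduct.tprod K
          (fun i => nested2 (fun a c => br a c) m' (x i))) :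
    (∀ k : ℕ, (h k) ∘ₗ (dn k) = (d2 k) ∘ₗ (h (k + 1))) ∧
    Function.Bijective (h 0) ∧
    (Submodule.span K (Set.range fun ab : L × L => br ab.1 ab.2) = ⊤ →
      ∀ k : ℕ, Function.Surjective (h k)) := by
  classical
  -- the core computation on pure tensors
  have hder : ∀ w a c : L, br (br a c) w = br (br a w) c + br a (br c w) := by
    intro w a c
    have h1 := hLeib a c w
    rw [eq_sub_iff_add_eq] at h1
    rw [← h1]
    abel
  have core : ∀ (k : ℕ) (mm : M) (l : L) (x : Fin (k + 1) → Fin (m' + 1) → L),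
      h k (dn k ((mm ⊗ₜ[K] l) ⊗ₜ[K]
        PiTensorProduct.tprod K (fun i => PiTensorProduct.tprod K (x i)))) =
      d2 k (h (k + 1) ((mm ⊗ₜ[K] l) ⊗ₜ[K]
        PiTensorProduct.tprod K (fun i => PiTensorProduct.tprod K (x i)))) := by
    intro k mm l x
    rw [hdn k (mm ⊗ₜ[K] l) (fun i => PiTensorProduct.tprod K (x i))]
    rw [hh (k + 1) (mm ⊗ₜ[K] l) x,
      hd2 k (mm ⊗ₜ[K] l) (fun i => nested2 (fun a c => br a c) m' (x i))]
    simp only [map_add, map_sum, map_zsmul, apply_ite (⇑(h k)), map_zero]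
    congr 1
    · congr 1
      · rw [hρ₁, nested2_cons']
        rw [show Fin.tail (fun i : Fin (k + 1) => PiTensorProduct.tprod K (x i))
            = (fun i : Fin k => PiTensorProduct.tprod K (Fin.tail x i)) from rfl]
        rw [hh k _ (Fin.tail x), hσ₁]
        rfl
      · apply Finset.sum_congr rfl
        intro t _
        by_cases ht : (t : ℕ) = 0
        · rw [if_pos ht, if_pos ht]
        · rw [if_neg ht, if_neg ht]
          congr 1
          rw [hρ₂, nested2_cons', hσ₂]
          rw [show Fin.removeNth t (fun i : Fin (k + 1) => PiTensorProduct.tprod K (x i))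
              = (fun i : Fin k => PiTensorProduct.tprod K (Fin.removeNth t x i)) from rfl]
          rw [neg_tmul, map_neg (h k), hh k _ (Fin.removeNth t x), neg_tmul]
          rfl
    · apply Finset.sum_congr rfl
      intro t _
      apply Finset.sum_congr rfl
      intro s _
      by_cases hst : (s : ℕ) < (t : ℕ)
      · rw [if_pos hst, if_pos hst]
        congr 1
        rw [hBg (x s) (x t)]
        simp only [nested2_cons']
        rw [removeNth_update_lt' t s hst _ (fun i : Fin (k + 1) => PiTensorProduct.tprod K (x i))]
        rw [(PiTensorProduct.tprod K).map_update_sum]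
        rw [tmul_sum, map_sum]
        rw [show Fin.removeNth t (fun i : Fin (k + 1) => PiTensorProduct.tprod K (x i))
            = (fun j : Fin k => PiTensorProduct.tprod K (Fin.removeNth t x j)) from rfl]
        simp only [show ∀ w : Fin (m' + 1) → L,
            Function.update (fun j : Fin k => PiTensorProduct.tprod K (Fin.removeNth t x j))
              ⟨(s : ℕ), by omega⟩ (PiTensorProduct.tprod K w)
            = fun j => PiTensorProduct.tprod K
                (Function.update (Fin.removeNth t x) ⟨(s : ℕ), by omega⟩ w j) from
          fun w => (map_update_family' (fun v => PiTensorProduct.tprod K v)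
            (Fin.removeNth t x) _ w).symm]
        simp only [hh k (mm ⊗ₜ[K] l)]
        simp only [map_update_family' (nested2 (fun a c => br a c) m') (Fin.removeNth t x)]
        rw [← tmul_sum, ← (PiTensorProduct.tprod K).map_update_sum]
        rw [nested2_rightmul' br hder (nested2 (fun a c => br a c) m' (x t)) m' (x s)]
        rw [removeNth_update_lt' t s hst _
          (fun i : Fin (k + 1) => nested2 (fun a c => br a c) m' (x i))]
        rfl
      · rw [if_neg hst, if_neg hst]
  refine ⟨?_, ?_, ?_⟩
  · -- chain map
    intro k
    apply LinearMap.ext_on (span_tmul_tprod_eq_top' K (M ⊗[K] L) _ (k + 1))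
    rintro _ ⟨nn, X, rfl⟩
    have key := multilinear_mem_of_span'
      (((((h k).comp (dn k)) - ((d2 k).comp (h (k + 1)))).comp
        (TensorProduct.mk K (M ⊗[K] L) _ nn)).compMultilinearMap (PiTensorProduct.tprod K))
      (Set.range ⇑(PiTensorProduct.tprod K (s := fun _ : Fin (m' + 1) => L)))
      PiTensorProduct.span_tprod_eq_top ⊥ ?_ X
    · simp only [LinearMap.compMultilinearMap_apply, LinearMap.coe_comp, Function.comp_apply,
        TensorProduct.mk_apply, LinearMap.sub_apply, Submodule.mem_bot, sub_eq_zero] at key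
      exact key
    · intro v hv
      have hx : ∀ i, ∃ xi : Fin (m' + 1) → L, PiTensorProduct.tprod K xi = v i := hv
      have hveq : v = fun i => PiTensorProduct.tprod K ((hx i).choose) :=
        funext fun i => ((hx i).choose_spec).symm
      set x : Fin (k + 1) → Fin (m' + 1) → L := fun i => (hx i).choose with hxdef
      simp only [LinearMap.compMultilinearMap_apply, LinearMap.coe_comp, Function.comp_apply,
        TensorProduct.mk_apply, LinearMap.sub_apply, Submodule.mem_bot, sub_eq_zero]
      rw [hveq]
      have hnn : nn ∈ Submodule.span K {t : M ⊗[K] L | ∃ mmm lll, mmm ⊗ₜ[K] lll = t} := by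
        rw [TensorProduct.span_tmul_eq_top]; trivial
      induction hnn using Submodule.span_induction with
      | mem c hc =>
        obtain ⟨mm, l, rfl⟩ := hc
        exact core k mm l x
      | zero => rw [TensorProduct.zero_tmul, map_zero, map_zero, map_zero, map_zero]
      | add u w _ _ hu hw =>
        rw [TensorProduct.add_tmul, map_add, map_add, map_add, map_add, hu, hw]
      | smul r u _ hu =>
        rw [← TensorProduct.smul_tmul', map_smul, map_smul, map_smul, map_smul, hu]
  · -- h 0 bijective
    have hE : h 0 = (TensorProduct.congr (LinearEquiv.refl K (M ⊗[K] L))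
        ((PiTensorProduct.isEmptyEquiv (Fin 0)).trans
          (PiTensorProduct.isEmptyEquiv (Fin 0)).symm)).toLinearMap := by
      apply LinearMap.ext_on (span_tmul_tprod_eq_top' K (M ⊗[K] L) _ 0)
      rintro _ ⟨nn, X, rfl⟩
      have hX : X = fun i : Fin 0 =>
          PiTensorProduct.tprod K ((fun j : Fin 0 => (fun _ => (0 : L))) i) :=
        funext fun i => i.elim0
      rw [hX, hh 0 nn (fun j : Fin 0 => fun _ => (0 : L))]
      rw [LinearEquiv.coe_coe, TensorProduct.congr_tmul]
      simp only [LinearEquiv.refl_apply, LinearEquiv.trans_apply,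
        PiTensorProduct.isEmptyEquiv_apply_tprod, PiTensorProduct.isEmptyEquiv_symm_apply,
        one_smul]
      congr 1
      exact congrArg _ (funext fun i => i.elim0)
    rw [hE]
    exact (TensorProduct.congr (LinearEquiv.refl K (M ⊗[K] L))
        ((PiTensorProduct.isEmptyEquiv (Fin 0)).trans
          (PiTensorProduct.isEmptyEquiv (Fin 0)).symm)).bijective
  · -- surjectivity
    intro hperf k
    rw [← LinearMap.range_eq_top, eq_top_iff, ← span_tmul_tprod_eq_top' K (M ⊗[K] L) L k]
    apply Submodule.span_le.mpr
    rintro _ ⟨nn, yv, rfl⟩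
    refine multilinear_mem_of_span'
      ((TensorProduct.mk K (M ⊗[K] L) (PiTensorProduct K fun _ : Fin k => L) nn).compMultilinearMap
        (PiTensorProduct.tprod K))
      (Set.range fun v : Fin (m' + 1) → L => nested2 (fun a c => br a c) m' v)
      (nested_span_top' br hperf m') (LinearMap.range (h k)) ?_ yv
    intro v hv
    have hx : ∀ i, ∃ xi : Fin (m' + 1) → L, nested2 (fun a c => br a c) m' xi = v i := hv
    refine ⟨nn ⊗ₜ[K] PiTensorProduct.tprod K (fun i => PiTensorProduct.tprod K ((hx i).choose)), ?_⟩
    rw [hh]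
    simp only [LinearMap.compMultilinearMap_apply, TensorProduct.mk_apply]
    have hveq : (fun i => nested2 (fun a c => br a c) m' ((hx i).choose)) = v :=
      funext fun i => (hx i).choose_spec
    rw [hveq]
end

section
/- If M is a trivial co-representation of a Leibniz n-algebra L, then the zeroth homology of L with coefficients in M is nHL_0(L, M) = M ⊗ (L/[L^n]); in particular, nHL_0(L, K) = L/[L^n], and it vanishes when L is perfect. -/
open Function TensorProduct

/-- for a trivial co-representation `M` of a Leibniz `n`-algebra `L`
(`n = m+1`), the zeroth homology `nHL_0(L,M) = coker(d_1 : (M⊗L)⊗L^{⊗(n-1)} → M⊗L)`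
is `M ⊗ (L/[L^n])`; in particular it vanishes when `L` is perfect. -/
theorem zeroth_homology {K L M : Type*} [Field K] [AddCommGroup L] [Module K L]
    [AddCommGroup M] [Module K M]
    (m : ℕ) (hm : 1 ≤ m)
    (b : MultilinearMap K (fun _ : Fin (m + 1) => L) L) (hb : FundId ⇑b) :
    ∀ d₁ : (M ⊗[K] L) ⊗[K] PiTensorProduct K (fun _ : Fin m => L) →ₗ[K] M ⊗[K] L,
      (∀ (mm : M) (l : L) (v : Fin m → L),
        d₁ ((mm ⊗ₜ[K] l) ⊗ₜ[K] PiTensorProduct.tprod K v) =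
          mm ⊗ₜ[K] b (Fin.cons l v)) →
      Nonempty
          (((M ⊗[K] L) ⧸ LinearMap.range d₁) ≃ₗ[K]
            M ⊗[K]
              (L ⧸ Submodule.span K (Set.range fun a : Fin (m + 1) → L => b a))) ∧
        (Submodule.span K (Set.range fun a : Fin (m + 1) → L => b a) = ⊤ →
          Subsingleton ((M ⊗[K] L) ⧸ LinearMap.range d₁)) := by
  intro d₁ hd₁
  set N : Submodule K L := Submodule.span K (Set.range fun a : Fin (m + 1) → L => b a)
    with hN
  have hrange : LinearMap.range d₁ = LinearMap.range (N.subtype.lTensor M) := by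
    apply le_antisymm
    · rintro _ ⟨x, rfl⟩
      induction x using TensorProduct.induction_on with
      | zero => simp
      | add x y hx hy => rw [map_add]; exact add_mem hx hy
      | tmul p q =>
        induction p using TensorProduct.induction_on with
        | zero => rw [TensorProduct.zero_tmul]; simp
        | add x y hx hy =>
          rw [TensorProduct.add_tmul, map_add]; exact add_mem hx hy
        | tmul mm l =>
          induction q using PiTensorProduct.induction_on with
          | smul_tprod c v =>
            rw [TensorProduct.tmul_smul, map_smul]
            refine Submodule.smul_mem _ _ ?_
            rw [hd₁]
            exact ⟨mm ⊗ₜ ⟨b (Fin.cons l v),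
              Submodule.subset_span ⟨Fin.cons l v, rfl⟩⟩, rfl⟩
          | add x y hx hy =>
            rw [TensorProduct.tmul_add, map_add]; exact add_mem hx hy
    · rintro _ ⟨x, rfl⟩
      induction x using TensorProduct.induction_on with
      | zero => simp
      | add x y hx hy => rw [map_add]; exact add_mem hx hy
      | tmul mm nl =>
        obtain ⟨n, hn⟩ := nl
        have : (N.subtype.lTensor M) (mm ⊗ₜ ⟨n, hn⟩) = mm ⊗ₜ n := rfl
        rw [this]
        clear this
        induction hn using Submodule.span_induction with
        | mem x hx =>
          obtain ⟨a, rfl⟩ := hx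
          refine ⟨(mm ⊗ₜ a 0) ⊗ₜ PiTensorProduct.tprod K (Fin.tail a), ?_⟩
          rw [hd₁, Fin.cons_self_tail]
        | zero => rw [TensorProduct.tmul_zero]; exact zero_mem _
        | add x y _ _ hx hy =>
          rw [TensorProduct.tmul_add]; exact add_mem hx hy
        | smul c x _ hx =>
          rw [TensorProduct.tmul_smul]; exact Submodule.smul_mem _ _ hx
  have hker : LinearMap.ker (N.mkQ.lTensor M) = LinearMap.range (N.subtype.lTensor M) :=
    lTensor_mkQ M N
  have hsurj : Function.Surjective (N.mkQ.lTensor M) :=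
    LinearMap.lTensor_surjective M (Submodule.mkQ_surjective N)
  constructor
  · refine ⟨?_⟩
    rw [hrange, ← hker]
    exact LinearMap.quotKerEquivOfSurjective _ hsurj
  · intro htop
    have h2 : LinearMap.range d₁ = ⊤ := by
      rw [hrange, LinearMap.range_eq_top]
      apply LinearMap.lTensor_surjective
      rw [← LinearMap.range_eq_top, Submodule.range_subtype]; exact htop
    rw [h2]
    exact Submodule.Quotient.subsingleton_iff.mpr rfl
end
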